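/- arXiv:2605.26792 — 14 statements merged into one kernel-verified Lean document; each statement's English description precedes it below -/
import Mathlib

section
/- Let n ≥ 3 and let M : Fin n → Fin n → Bool be an absorbing state of the binary trust gossip model. If i, j, k are pairwise distinct agents with i ∼ j and i ∼ k (mutual trust), then j ∼ k. (Transitivity of the mutual trust relation in absorbing states.) -/
/-- A state `M` is absorbing if for all pairwise distinct agents `a z y`,
if `z` trusts `a` then `z` already agrees with `a` about `y`. -/
def Absorbing {n : ℕ} (M : Fin n → Fin n → Bool) : Prop :=
  ∀ a z y : Fin n, a ≠ z → a ≠ y → z ≠ y → M z a = true → M z y = M a y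

theorem Absorbing.trust_trans {n : ℕ} {M : Fin n → Fin n → Bool} (habs : Absorbing M)
    {z a y : Fin n} (hza : z ≠ a) (hay : a ≠ y) (hzy : z ≠ y)
    (hmza : M z a = true) (hmay : M a y = true) : M z y = true :=
  (habs a z y hza.symm hay hzy hmza).trans hmay

theorem mutual_trust_trans_general {n : ℕ} (M : Fin n → Fin n → Bool) (habs : Absorbing M)
    (i j k : Fin n) (hij : i ≠ j) (hik : i ≠ k) (hjk : j ≠ k)
    (hmij : M i j = true ∧ M j i = true) (hmik : M i k = true ∧ M k i = true) :
    M j k = true ∧ M k j = true :=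
  ⟨habs.trust_trans hij.symm hik hjk hmij.2 hmik.1,
    habs.trust_trans hik.symm hij hjk.symm hmik.2 hmij.1⟩

/-- Transitivity of the mutual trust relation in absorbing states. -/
theorem mutual_trust_trans {n : ℕ} (hn : 3 ≤ n) (M : Fin n → Fin n → Bool)
    (hdiag : ∀ i, M i i = false) (habs : Absorbing M)
    (i j k : Fin n) (hij : i ≠ j) (hik : i ≠ k) (hjk : j ≠ k)
    (hmij : M i j = true ∧ M j i = true) (hmik : M i k = true ∧ M k i = true) :
    M j k = true ∧ M k j = true :=
  mutual_trust_trans_general M habs i j k hij hik hjk hmij hmik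
end

section
/- Let n ≥ 3 and let M : Fin n → Fin n → Bool be an absorbing state of the binary trust gossip model. If an agent i has outgoing one-way trust relations to two distinct agents j and k (i.e. i ▷ j and i ▷ k with j ≠ k), then j ∼ k (the two targets share mutual trust). -/
theorem Absorbing.trusts_of_common_truster {n : ℕ} {M : Fin n → Fin n → Bool}
    (habs : Absorbing M) {z a y : Fin n} (hza : z ≠ a) (hzy : z ≠ y) (hay : a ≠ y)
    (ha : M z a = true) (hy : M z y = true) : M a y = true :=
  (habs a z y hza.symm hay hzy ha).symm.trans hy

theorem oneway_targets_mutual_general {n : ℕ} (M : Fin n → Fin n → Bool)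
    (habs : Absorbing M)
    (i j k : Fin n) (hij : i ≠ j) (hik : i ≠ k) (hjk : j ≠ k)
    (h1 : M i j = true ∧ M j i = false)
    (h2 : M i k = true ∧ M k i = false) :
    M j k = true ∧ M k j = true :=
  ⟨habs.trusts_of_common_truster hij hik hjk h1.1 h2.1,
    habs.trusts_of_common_truster hik hij hjk.symm h2.1 h1.1⟩

/-- In an absorbing state, two one-way trust targets of one agent share mutual trust. -/
theorem oneway_targets_mutual {n : ℕ} (hn : 3 ≤ n) (M : Fin n → Fin n → Bool)
    (hdiag : ∀ i, M i i = false) (habs : Absorbing M)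
    (i j k : Fin n) (hij : i ≠ j) (hik : i ≠ k) (hjk : j ≠ k)
    (h1 : M i j = true ∧ M j i = false)
    (h2 : M i k = true ∧ M k i = false) :
    M j k = true ∧ M k j = true :=
  oneway_targets_mutual_general M habs i j k hij hik hjk h1 h2
end

section
/- Let n ≥ 3 and let M : Fin n → Fin n → Bool be an absorbing state of the binary trust gossip model. If an agent j has at least one outgoing one-way trust relation (j ▷ k for some k), then j has no incoming one-way trust relations: there is no agent i with i ▷ j. -/
theorem Absorbing.trust_trans_s4 {n : ℕ} {M : Fin n → Fin n → Bool} (habs : Absorbing M)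
    {x y z : Fin n} (hxy : x ≠ y) (hyz : y ≠ z) (hxz : x ≠ z)
    (hMxy : M x y = true) (hMyz : M y z = true) : M x z = true :=
  (habs y x z hxy.symm hyz hxz hMxy).trans hMyz

theorem no_incoming_if_outgoing_general {n : ℕ} (M : Fin n → Fin n → Bool)
    (habs : Absorbing M)
    (j k : Fin n) (hjk : j ≠ k)
    (hout : M j k = true ∧ M k j = false) :
    ¬ ∃ i : Fin n, i ≠ j ∧ M i j = true ∧ M j i = false := by
  rintro ⟨i, hij, hMij, -⟩
  have hik : i ≠ k := by
    rintro rfl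
    simp [hMij] at hout
  have hMik : M i k = true := habs.trust_trans_s4 hij hjk hik hMij hout.1
  have hagree : M i j = M k j := habs k i j hik.symm hjk.symm hij hMik
  simp [hMij, hout.2] at hagree

/-- In an absorbing state, an agent with an outgoing one-way trust relation
has no incoming one-way trust relations. -/
theorem no_incoming_if_outgoing {n : ℕ} (hn : 3 ≤ n) (M : Fin n → Fin n → Bool)
    (hdiag : ∀ i, M i i = false) (habs : Absorbing M)
    (j k : Fin n) (hjk : j ≠ k)
    (hout : M j k = true ∧ M k j = false) :
    ¬ ∃ i : Fin n, i ≠ j ∧ M i j = true ∧ M j i = false :=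
  no_incoming_if_outgoing_general M habs j k hjk hout
end

section
/- Let n ≥ 3 and let M : Fin n → Fin n → Bool be an absorbing state of the binary trust gossip model. Suppose agent i has at least one one-way trust target, and let T = {j | i ▷ j} be the set of all one-way trust targets of i. Then: (a) any two distinct members of T share mutual trust (for all j, k ∈ T with j ≠ k, j ∼ k); (b) T is closed under mutual trust (if j ∈ T and j ∼ k with k ≠ i, then k ∈ T); and (c) no member of T has any outgoing one-way trust relation. -/
def oneWayTargets {n : ℕ} (M : Fin n → Fin n → Bool) (i : Fin n) : Set (Fin n) :=
  {j | j ≠ i ∧ M i j = true ∧ M j i = false}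

/-! Since `i` trusts every `j ∈ T`, absorption makes `i` agree with `j` about every third agent;
and whoever `j` trusts agrees with `j` about `i`. So `T` is closed under outgoing trust of its
members, and any two members trust each other because `i` trusts both. A one-way trust `j ▷ k`
out of `T` would put `k` in `T` and then force `k` to trust `j`. -/

namespace Absorbing

variable {n : ℕ} {M : Fin n → Fin n → Bool}

theorem trust_of_mem_oneWayTargets (habs : Absorbing M) {i j k : Fin n}
    (hj : j ∈ oneWayTargets M i) (hk : k ∈ oneWayTargets M i) (hjk : j ≠ k) : M j k = true := by
  obtain ⟨hji, hij, -⟩ := hj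
  obtain ⟨hki, hik, -⟩ := hk
  rw [← habs j i k hji hjk hki.symm hij, hik]

theorem mem_oneWayTargets_of_trust (habs : Absorbing M) {i j k : Fin n}
    (hj : j ∈ oneWayTargets M i) (hkj : k ≠ j) (hjk : M j k = true) : k ∈ oneWayTargets M i := by
  obtain ⟨hji, hij, hji'⟩ := hj
  have hki : k ≠ i := by
    rintro rfl
    simp [hji'] at hjk
  refine ⟨hki, ?_, ?_⟩
  · rw [habs j i k hji hkj.symm hki.symm hij, hjk]
  · rw [← habs k j i hkj hki hji hjk, hji']

end Absorbing

theorem oneway_target_set_structure_general {n : ℕ} (M : Fin n → Fin n → Bool)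
    (habs : Absorbing M)
    (i : Fin n) :
    (∀ j ∈ oneWayTargets M i, ∀ k ∈ oneWayTargets M i, j ≠ k →
        M j k = true ∧ M k j = true) ∧
    (∀ j ∈ oneWayTargets M i, ∀ k : Fin n, k ≠ i → k ≠ j →
        (M j k = true ∧ M k j = true) → k ∈ oneWayTargets M i) ∧
    (∀ j ∈ oneWayTargets M i, ¬ ∃ k : Fin n, k ≠ j ∧ M j k = true ∧ M k j = false) := by
  refine ⟨fun j hj k hk hjk => ?_, fun j hj k _ hkj hmutual => ?_, ?_⟩
  · exact ⟨habs.trust_of_mem_oneWayTargets hj hk hjk,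
      habs.trust_of_mem_oneWayTargets hk hj hjk.symm⟩
  · exact habs.mem_oneWayTargets_of_trust hj hkj hmutual.1
  · rintro j hj ⟨k, hkj, hjk, hkj'⟩
    have hk := habs.mem_oneWayTargets_of_trust hj hkj hjk
    simp [habs.trust_of_mem_oneWayTargets hk hj hkj] at hkj'

/-- Structure of the set `T` of one-way trust targets of an agent in an absorbing
state: (a) any two distinct members of `T` share mutual trust; (b) `T` is closed
under mutual trust; (c) no member of `T` has any outgoing one-way trust relation. -/
theorem oneway_target_set_structure {n : ℕ} (hn : 3 ≤ n) (M : Fin n → Fin n → Bool)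
    (hdiag : ∀ i, M i i = false) (habs : Absorbing M)
    (i : Fin n) (hne : (oneWayTargets M i).Nonempty) :
    (∀ j ∈ oneWayTargets M i, ∀ k ∈ oneWayTargets M i, j ≠ k →
        M j k = true ∧ M k j = true) ∧
    (∀ j ∈ oneWayTargets M i, ∀ k : Fin n, k ≠ i → k ≠ j →
        (M j k = true ∧ M k j = true) → k ∈ oneWayTargets M i) ∧
    (∀ j ∈ oneWayTargets M i, ¬ ∃ k : Fin n, k ≠ j ∧ M j k = true ∧ M k j = false) :=
  oneway_target_set_structure_general M habs i
end

section
/- Sufficiency direction of the Characterization Theorem: let n ≥ 1 and let M : Fin n → Fin n → Bool be an opinion state. Suppose there exist a finite partition P of the set Fin n into non-empty blocks (factions) and a set C ⊆ Fin n (the core members) such that every block of P has non-empty intersection with C, and such that for all distinct agents i, j: M i j = true if and only if i and j lie in the same block of P and j ∈ C. Then M is an absorbing state. -/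
theorem Finpartition.exists_mem_parts_and_mem_iff {α : Type*} [DecidableEq α] {s : Finset α}
    (P : Finpartition s) {F : Finset α} (hF : F ∈ P.parts) {a : α} (ha : a ∈ F) (y : α) :
    (∃ G ∈ P.parts, a ∈ G ∧ y ∈ G) ↔ y ∈ F :=
  ⟨fun ⟨_, hG, haG, hyG⟩ => P.eq_of_mem_parts hG hF haG ha ▸ hyG, fun hy => ⟨F, hF, ha, hy⟩⟩

theorem absorbing_of_faction_core_general {n : ℕ}
    (M : Fin n → Fin n → Bool)
    (P : Finpartition (Finset.univ : Finset (Fin n))) (C : Finset (Fin n))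
    (hchar : ∀ i j : Fin n, i ≠ j →
      (M i j = true ↔ (∃ F ∈ P.parts, i ∈ F ∧ j ∈ F) ∧ j ∈ C)) :
    Absorbing M := by
  intro a z y haz hay hzy hza
  obtain ⟨⟨F, hF, hzF, haF⟩, -⟩ := (hchar z a haz.symm).1 hza
  rw [Bool.eq_iff_iff, hchar z y hzy, hchar a y hay, P.exists_mem_parts_and_mem_iff hF hzF,
    P.exists_mem_parts_and_mem_iff hF haF]

/-- Sufficiency direction of the Characterization Theorem: a state with
faction/core structure is absorbing. -/
theorem absorbing_of_faction_core {n : ℕ} (hn : 1 ≤ n)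
    (M : Fin n → Fin n → Bool) (hdiag : ∀ i, M i i = false)
    (P : Finpartition (Finset.univ : Finset (Fin n))) (C : Finset (Fin n))
    (hcore : ∀ F ∈ P.parts, (F ∩ C).Nonempty)
    (hchar : ∀ i j : Fin n, i ≠ j →
      (M i j = true ↔ (∃ F ∈ P.parts, i ∈ F ∧ j ∈ F) ∧ j ∈ C)) :
    Absorbing M :=
  absorbing_of_faction_core_general M P C hchar
end

section
/- Necessity direction of the Characterization Theorem: let n ≥ 3 and let M : Fin n → Fin n → Bool be an absorbing state. Then there exist a finite partition P of the set Fin n into non-empty blocks (factions) and a set C ⊆ Fin n (the core members) such that every block of P has non-empty intersection with C, and such that for all distinct agents i, j: M i j = true if and only if i and j lie in the same block of P and j ∈ C. -/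
/-- Necessity direction of the Characterization Theorem: every absorbing state
has faction/core structure. -/
theorem faction_core_of_absorbing {n : ℕ} (hn : 3 ≤ n)
    (M : Fin n → Fin n → Bool) (hdiag : ∀ i, M i i = false)
    (habs : Absorbing M) :
    ∃ (P : Finpartition (Finset.univ : Finset (Fin n))) (C : Finset (Fin n)),
      (∀ F ∈ P.parts, (F ∩ C).Nonempty) ∧
      ∀ i j : Fin n, i ≠ j →
        (M i j = true ↔ (∃ F ∈ P.parts, i ∈ F ∧ j ∈ F) ∧ j ∈ C) := by
  classical
  -- the core: agents trusted by someone, plus totally isolated agents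
  set C : Finset (Fin n) :=
    Finset.univ.filter (fun j =>
      (∃ i, i ≠ j ∧ M i j = true) ∨ (∀ i, M i j = false ∧ M j i = false)) with hC
  have memC : ∀ j : Fin n, j ∈ C ↔
      ((∃ i, i ≠ j ∧ M i j = true) ∨ (∀ i, M i j = false ∧ M j i = false)) := by
    intro j; simp [hC]
  -- the "local core" seen by each agent
  set K : Fin n → Finset (Fin n) :=
    fun i => (Finset.univ.filter (fun j => M i j = true)) ∪
      (if i ∈ C then {i} else ∅) with hK
  have memK : ∀ i y : Fin n, y ∈ K i ↔ (M i y = true ∨ (y = i ∧ i ∈ C)) := by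
    intro i y
    by_cases h : i ∈ C <;> simp [hK, h] <;> tauto
  -- basic absorbing consequences
  have trusted_core : ∀ i j : Fin n, i ≠ j → M i j = true → j ∈ C := by
    intro i j hij h
    exact (memC j).2 (Or.inl ⟨i, hij, h⟩)
  -- if i trusts j, then i and j see the same local core
  have Keq : ∀ i j : Fin n, i ≠ j → M i j = true → K i = K j := by
    intro i j hij hMij
    have hjC : j ∈ C := trusted_core i j hij hMij
    ext y
    rw [memK, memK]
    by_cases hyi : y = i
    · subst hyi
      simp only [hdiag y, Bool.false_eq_true, false_or, true_and, eq_self_iff_true]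
      constructor
      · intro hyC
        -- y ∈ C : y is trusted by someone (it is not isolated since M y j = true)
        rcases (memC y).1 hyC with ⟨z, hzy, hzMy⟩ | hiso
        · -- z trusts y; show M j y
          rcases eq_or_ne z j with rfl | hzj
          · exact Or.inl hzMy
          · -- z ≠ j, z ≠ y : z trusts y, so z agrees with y about j, so M z j = true
            have h1 : M z j = M y j := habs y z j (Ne.symm hzy) hij hzj hzMy
            have hzj' : M z j = true := h1.trans hMij
            -- z trusts j and y, so j and y agree... use habs with a = j
            have h2 : M z y = M j y := habs j z y (Ne.symm hzj) hij.symm hzy hzj'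
            exact Or.inl (h2.symm.trans hzMy)
        · exact absurd hMij (by simp [(hiso j).2])
      · rintro (h | ⟨e, -⟩)
        · exact trusted_core j y (fun e => hij e.symm) h
        · exact absurd e hij
    · by_cases hyj : y = j
      · subst hyj
        simp [hdiag y, hMij, hjC, hij]
      · -- y ∉ {i, j} : M i y = M j y by absorbing
        have h1 : M i y = M j y := habs j i y (Ne.symm hij) (fun e => hyj e.symm)
          (fun e => hyi e.symm) hMij
        simp [h1, hyi, hyj]
  -- every local core is nonempty and consists of core members of the same faction
  have Kcore : ∀ i : Fin n, ∃ c, c ∈ C ∧ K c = K i := by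
    intro i
    by_cases hiC : i ∈ C
    · exact ⟨i, hiC, rfl⟩
    · -- i ∉ C : i is not isolated and not trusted, so i trusts someone
      have hnt : ¬ ∃ z, z ≠ i ∧ M z i = true := fun h => hiC ((memC i).2 (Or.inl h))
      have hex : ∃ z, M i z = true := by
        by_contra hno
        push_neg at hno
        refine hiC ((memC i).2 (Or.inr fun z => ⟨?_, ?_⟩))
        · by_cases hz : z = i
          · subst hz; exact hdiag z
          · cases h : M z i
            · rfl
            · exact absurd ⟨z, hz, h⟩ hnt
        · exact Bool.eq_false_iff.2 (hno z)
      obtain ⟨z, hMiz⟩ := hex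
      have hiz : i ≠ z := by
        intro e; subst e; simp [hdiag i] at hMiz
      exact ⟨z, trusted_core i z hiz hMiz, (Keq i z hiz hMiz).symm⟩
  -- the partition into factions: fibers of K
  set s : Setoid (Fin n) := ⟨fun i j => K i = K j,
    ⟨fun _ => rfl, fun h => h.symm, fun h1 h2 => h1.trans h2⟩⟩ with hs
  haveI : DecidableRel s.r := fun i j => by
    show Decidable (K i = K j); infer_instance
  set P : Finpartition (Finset.univ : Finset (Fin n)) := Finpartition.ofSetoid s with hP
  have same_part : ∀ i j : Fin n, (∃ F ∈ P.parts, i ∈ F ∧ j ∈ F) ↔ K i = K j := by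
    intro i j
    constructor
    · rintro ⟨F, hF, hiF, hjF⟩
      rw [← P.part_eq_of_mem hF hiF] at hjF
      exact Finpartition.mem_part_ofSetoid_iff_rel.1 hjF
    · intro h
      exact ⟨P.part i, P.part_mem.2 (Finset.mem_univ i), P.mem_part (Finset.mem_univ i),
        Finpartition.mem_part_ofSetoid_iff_rel.2 h⟩
  refine ⟨P, C, ?_, ?_⟩
  · -- every faction meets the core
    intro F hF
    obtain ⟨i, hiF⟩ := P.nonempty_of_mem_parts hF
    obtain ⟨c, hcC, hcK⟩ := Kcore i
    refine ⟨c, Finset.mem_inter.2 ⟨?_, hcC⟩⟩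
    rw [← P.part_eq_of_mem hF hiF]
    exact Finpartition.mem_part_ofSetoid_iff_rel.2 hcK.symm
  · intro i j hij
    rw [same_part]
    constructor
    · intro h
      exact ⟨Keq i j hij h, trusted_core i j hij h⟩
    · rintro ⟨hKij, hjC⟩
      have : j ∈ K j := (memK j j).2 (Or.inr ⟨rfl, hjC⟩)
      rw [← hKij, memK] at this
      rcases this with h | ⟨e, _⟩
      · exact h
      · exact absurd e.symm hij
end

section
/- Characterization Theorem: let n ≥ 3 and let M : Fin n → Fin n → Bool be an opinion state. Then M is an absorbing state if and only if there exist a finite partition P of the set Fin n into non-empty blocks (factions) and a set C ⊆ Fin n (the core members) such that every block of P has non-empty intersection with C, and such that for all distinct agents i, j: M i j = true if and only if i and j lie in the same block of P and j ∈ C. -/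
/-- Auxiliary relation: `i` and `j` share a member that each trusts-or-equals. -/
def AbsRel {n : ℕ} (M : Fin n → Fin n → Bool) (i j : Fin n) : Prop :=
  ∃ c, (M i c = true ∨ i = c) ∧ (M j c = true ∨ j = c)

instance {n : ℕ} (M : Fin n → Fin n → Bool) : DecidableRel (AbsRel M) :=
  fun _ _ => Fintype.decidableExistsFintype

theorem absRel_refl {n : ℕ} (M : Fin n → Fin n → Bool) (i : Fin n) : AbsRel M i i :=
  ⟨i, Or.inr rfl, Or.inr rfl⟩

theorem absRel_symm {n : ℕ} {M : Fin n → Fin n → Bool} {i j : Fin n}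
    (h : AbsRel M i j) : AbsRel M j i := by
  obtain ⟨c, h1, h2⟩ := h; exact ⟨c, h2, h1⟩

section
variable {n : ℕ} {M : Fin n → Fin n → Bool}

theorem absL1 (hA : Absorbing M) {z a y : Fin n} (hza : z ≠ a) (hay : a ≠ y) (hzy : z ≠ y)
    (h1 : M z a = true) (h2 : M a y = true) : M z y = true := by
  rw [hA a z y hza.symm hay hzy h1]; exact h2

theorem absL2 (hA : Absorbing M) {z a y : Fin n} (hza : z ≠ a) (hay : a ≠ y) (hzy : z ≠ y)
    (h1 : M z a = true) (h2 : M z y = true) : M a y = true := by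
  rw [← hA a z y hza.symm hay hzy h1]; exact h2

theorem absRel_agree (hA : Absorbing M) (hdiag : ∀ i, M i i = false)
    {i j y : Fin n} (hij : i ≠ j) (hyi : y ≠ i) (hyj : y ≠ j)
    (h : AbsRel M i j) : M i y = M j y := by
  obtain ⟨c, h1, h2⟩ := h
  rcases h1 with h1 | rfl
  · rcases h2 with h2 | rfl
    · -- M i c, M j c
      have hci : c ≠ i := fun h => by rw [h, hdiag] at h1; exact Bool.false_ne_true h1
      have hcj : c ≠ j := fun h => by rw [h, hdiag] at h2; exact Bool.false_ne_true h2
      by_cases hyc : y = c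
      · subst hyc; rw [h1, h2]
      · have e1 := hA c i y hci (Ne.symm hyc) hyi.symm h1
        have e2 := hA c j y hcj (Ne.symm hyc) hyj.symm h2
        rw [e1, e2]
    · -- c = j : M i j
      exact hA j i y hij.symm hyj.symm hyi.symm h1
  · -- c = i : M j i
    rcases h2 with h2 | rfl
    · exact (hA i j y hij hyi.symm hyj.symm h2).symm
    · exact absurd rfl hij

theorem absRel_trans (hA : Absorbing M) (hdiag : ∀ i, M i i = false)
    {i j k : Fin n} (h1 : AbsRel M i j) (h2 : AbsRel M j k) :
    AbsRel M i k := by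
  by_cases hij : i = j; · exact hij ▸ h2
  by_cases hjk : j = k; · exact hjk ▸ h1
  by_cases hik : i = k; · exact hik ▸ absRel_refl M k
  obtain ⟨d, hd1, hd2⟩ := h2
  by_cases hdj : d = j
  · have hkj : M k j = true := (hdj ▸ hd2).resolve_right (fun h => hjk h.symm)
    obtain ⟨c, hc1, hc2⟩ := h1
    rcases hc2 with hc2 | rfl
    · rcases hc1 with hc1 | rfl
      · -- M i c, M j c, maybe c = k
        have hci : c ≠ i := fun h => by rw [h, hdiag] at hc1; exact Bool.false_ne_true hc1
        have hcj : c ≠ j := fun h => by rw [h, hdiag] at hc2; exact Bool.false_ne_true hc2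
        by_cases hck : c = k
        · exact ⟨k, Or.inl (hck ▸ hc1), Or.inr rfl⟩
        · have : M k c = true := absL1 hA (fun h => hjk h.symm) hcj.symm (fun h => hck h.symm) hkj hc2
          exact ⟨c, Or.inl hc1, Or.inl this⟩
      · -- c = i : M j i
        have : M k i = true := absL1 hA (fun h => hjk h.symm) (fun h => hij h.symm) (fun h => hik h.symm) hkj hc2
        exact ⟨i, Or.inr rfl, Or.inl this⟩
    · -- c = j : M i j
      exact ⟨j, hc1, Or.inl hkj⟩
  · -- d ≠ j so M j d
    have hjd : M j d = true := hd1.resolve_right (fun h => hdj h.symm)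
    by_cases hdi : d = i
    · exact ⟨i, Or.inr rfl, hdi ▸ hd2⟩
    · have : M i d = true := by
        rw [absRel_agree hA hdiag hij hdi hdj h1]; exact hjd
      exact ⟨d, Or.inl this, hd2⟩

end

/-- Characterization Theorem: a state is absorbing iff it has faction/core
structure: agents are partitioned into factions, each with a non-empty core,
and an agent trusts exactly the core members of its own faction. -/
theorem absorbing_iff_faction_core {n : ℕ} (hn : 3 ≤ n)
    (M : Fin n → Fin n → Bool) (hdiag : ∀ i, M i i = false) :
    Absorbing M ↔
      ∃ (P : Finpartition (Finset.univ : Finset (Fin n))) (C : Finset (Fin n)),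
        (∀ F ∈ P.parts, (F ∩ C).Nonempty) ∧
        ∀ i j : Fin n, i ≠ j →
          (M i j = true ↔ (∃ F ∈ P.parts, i ∈ F ∧ j ∈ F) ∧ j ∈ C) := by
  constructor
  · intro hA
    set s : Setoid (Fin n) := ⟨AbsRel M, absRel_refl M, absRel_symm, absRel_trans hA hdiag⟩ with hs
    have hdr : DecidableRel s.r := fun i j => Fintype.decidableExistsFintype
    set P := Finpartition.ofSetoid s with hP
    set C : Finset (Fin n) :=
      Finset.univ.filter (fun j => (∃ i, i ≠ j ∧ M i j = true) ∨
        ∀ i, i ≠ j → M j i = false ∧ M i j = false) with hC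
    have memC : ∀ j, j ∈ C ↔ ((∃ i, i ≠ j ∧ M i j = true) ∨
        ∀ i, i ≠ j → M j i = false ∧ M i j = false) := by
      intro j; simp [hC]
    have partIff : ∀ i j : Fin n, (∃ F ∈ P.parts, i ∈ F ∧ j ∈ F) ↔ AbsRel M i j := by
      intro i j
      constructor
      · rintro ⟨F, hF, hiF, hjF⟩
        have := P.part_eq_of_mem hF hiF
        subst this
        exact Finpartition.mem_part_ofSetoid_iff_rel.mp hjF
      · intro h
        exact ⟨P.part i, P.part_mem.mpr (Finset.mem_univ i), P.mem_part (Finset.mem_univ i),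
          Finpartition.mem_part_ofSetoid_iff_rel.mpr h⟩
    refine ⟨P, C, ?_, ?_⟩
    · intro F hF
      obtain ⟨x, hx⟩ := P.nonempty_of_mem_parts hF
      by_cases h : ∃ c ∈ F, ∃ i, i ≠ c ∧ M i c = true
      · obtain ⟨c, hcF, hi⟩ := h
        exact ⟨c, Finset.mem_inter.mpr ⟨hcF, (memC c).mpr (Or.inl hi)⟩⟩
      · push_neg at h
        refine ⟨x, Finset.mem_inter.mpr ⟨hx, (memC x).mpr (Or.inr ?_)⟩⟩
        intro i hix
        constructor
        · by_contra hxi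
          have hxi' : M x i = true := by simpa using hxi
          -- then i ∈ F since AbsRel x i
          have hrel : AbsRel M x i := ⟨i, Or.inl hxi', Or.inr rfl⟩
          have hiF : i ∈ F := by
            have := P.part_eq_of_mem hF hx
            subst this
            exact Finpartition.mem_part_ofSetoid_iff_rel.mpr hrel
          exact absurd hxi' (by simpa using h i hiF x hix.symm)
        · by_contra hix'
          have : M i x = true := by simpa using hix'
          exact absurd this (by simpa using h x hx i hix)
    · intro i j hij
      rw [partIff]
      constructor
      · intro hMij
        exact ⟨⟨j, Or.inl hMij, Or.inr rfl⟩, (memC j).mpr (Or.inl ⟨i, hij, hMij⟩)⟩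
      · rintro ⟨hrel, hjC⟩
        rcases (memC j).mp hjC with ⟨m, hmj, hMmj⟩ | hiso
        · -- main case
          obtain ⟨c, hc1, hc2⟩ := hrel
          rcases hc2 with hc2 | rfl
          · rcases hc1 with hc1 | rfl
            · -- M i c, M j c
              have hci : c ≠ i := fun h => by subst h; simp_all [hdiag]
              have hcj : c ≠ j := fun h => by subst h; simp_all [hdiag]
              by_cases hmi : m = i
              · exact hmi ▸ hMmj
              by_cases hmc : m = c
              · subst hmc
                exact absL1 hA hci.symm (fun h => hcj h) hij hc1 hMmj
              · have h1 : M m c = true :=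
                  absL1 hA hmj hcj.symm hmc hMmj hc2
                have h2 : M c j = true :=
                  absL2 hA hmc (fun h => hcj h) hmj h1 hMmj
                exact absL1 hA hci.symm (fun h => hcj h) hij hc1 h2
            · -- c = i : M j i
              by_cases hmi : m = i
              · exact hmi ▸ hMmj
              · have h1 : M m i = true := absL1 hA hmj (fun h => hij h.symm) hmi hMmj hc2
                exact absL2 hA hmi (fun h => hij h) hmj h1 hMmj
          · -- c = j : M i j
            exact hc1.resolve_right hij
        · -- j isolated: contradiction with hrel
          obtain ⟨c, hc1, hc2⟩ := hrel
          rcases hc2 with hc2 | rfl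
          · have hcj : c ≠ j := fun h => by subst h; simp_all [hdiag]
            exact absurd hc2 (by simpa using (hiso c hcj).1)
          · rcases hc1 with hc1 | rfl
            · exact absurd hc1 (by simpa using (hiso i hij).2)
            · exact absurd rfl hij
  · rintro ⟨P, C, _, hchar⟩
    intro a z y haz hay hzy hza
    obtain ⟨⟨F, hF, hzF, haF⟩, haC⟩ := (hchar z a (Ne.symm haz)).mp hza
    have key : (∃ G ∈ P.parts, z ∈ G ∧ y ∈ G) ↔ (∃ G ∈ P.parts, a ∈ G ∧ y ∈ G) := by
      constructor
      · rintro ⟨G, hG, hzG, hyG⟩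
        have := P.eq_of_mem_parts hG hF hzG hzF
        subst this
        exact ⟨G, hG, haF, hyG⟩
      · rintro ⟨G, hG, haG, hyG⟩
        have := P.eq_of_mem_parts hG hF haG haF
        subst this
        exact ⟨G, hG, hzF, hyG⟩
    have h1 := hchar z y hzy
    have h2 := hchar a y hay
    have : M z y = true ↔ M a y = true := by
      rw [h1, h2, key]
    cases hzyv : M z y <;> cases hayv : M a y <;> simp_all
end

section
/- Uniqueness of the faction/core data: let n ≥ 3 and let M : Fin n → Fin n → Bool be an absorbing state. If (P, C) and (P', C') are two pairs each consisting of a finite partition of Fin n and a core set such that every block meets the core set, and such that for all distinct i, j: M i j = true if and only if i and j lie in the same block and j lies in the core set, then P = P' and C = C'. -/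
/-!
Both the factions and the core can be read off the trust relation alone. Two agents lie in the
same faction iff each of them either is or trusts one common agent (a core member of their
faction); an agent is in the core iff somebody trusts it or it trusts nobody (it is then alone
in its faction, whose core must meet it).
-/

open Finset

namespace Finpartition

variable {α : Type*} [DecidableEq α] {s : Finset α}

theorem eq_of_part_eq {P Q : Finpartition s} (h : ∀ a, P.part a = Q.part a) : P = Q := by
  have parts_subset :
      ∀ {P Q : Finpartition s}, (∀ a, P.part a = Q.part a) → P.parts ⊆ Q.parts := by
    intro P Q h F hF
    obtain ⟨x, hx⟩ := P.nonempty_of_mem_parts hF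
    rw [← P.part_eq_of_mem hF hx, h]
    exact Q.part_mem.2 (P.le hF hx)
  exact Finpartition.ext ((parts_subset h).antisymm (parts_subset fun a ↦ (h a).symm))

end Finpartition

structure IsFactionCore {α : Type*} [Fintype α] [DecidableEq α] (M : α → α → Bool)
    (P : Finpartition (univ : Finset α)) (C : Finset α) : Prop where
  inter_core_nonempty : ∀ F ∈ P.parts, (F ∩ C).Nonempty
  trust_iff_exists_part : ∀ i j : α, i ≠ j →
    (M i j = true ↔ (∃ F ∈ P.parts, i ∈ F ∧ j ∈ F) ∧ j ∈ C)

namespace IsFactionCore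

variable {α : Type*} [Fintype α] [DecidableEq α] {M : α → α → Bool}
  {P : Finpartition (univ : Finset α)} {C : Finset α}

theorem trust_iff (h : IsFactionCore M P C) {i j : α} (hij : i ≠ j) :
    M i j = true ↔ P.part i = P.part j ∧ j ∈ C := by
  rw [h.trust_iff_exists_part i j hij, ← P.mem_part_iff_exists,
    P.mem_part_iff_part_eq_part (mem_univ i) (mem_univ j)]

theorem part_eq_of_trust (h : IsFactionCore M P C) {i j : α} (hij : M i j = true) :
    P.part i = P.part j := by
  by_cases hne : i = j
  · rw [hne]
  · exact ((h.trust_iff hne).1 hij).1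

theorem exists_core_part_eq (h : IsFactionCore M P C) (i : α) :
    ∃ c ∈ C, P.part c = P.part i := by
  obtain ⟨c, hc⟩ := h.inter_core_nonempty _ (P.part_mem.2 (mem_univ i))
  rw [mem_inter] at hc
  exact ⟨c, hc.2, P.part_eq_of_mem (P.part_mem.2 (mem_univ i)) hc.1⟩

theorem part_eq_iff (h : IsFactionCore M P C) (x y : α) :
    P.part x = P.part y ↔ ∃ c, (x = c ∨ M x c = true) ∧ (y = c ∨ M y c = true) := by
  constructor
  · intro hxy
    obtain ⟨c, hcC, hcy⟩ := h.exists_core_part_eq y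
    have reaches : ∀ z, P.part z = P.part c → z = c ∨ M z c = true := fun z hz ↦
      or_iff_not_imp_left.2 fun hzc ↦ (h.trust_iff hzc).2 ⟨hz, hcC⟩
    exact ⟨c, reaches x (hxy.trans hcy.symm), reaches y hcy.symm⟩
  · rintro ⟨c, hx, hy⟩
    have part_eq : ∀ z, z = c ∨ M z c = true → P.part z = P.part c := by
      rintro z (rfl | hz)
      exacts [rfl, h.part_eq_of_trust hz]
    exact (part_eq x hx).trans (part_eq y hy).symm

theorem mem_core_iff (h : IsFactionCore M P C) (j : α) :
    j ∈ C ↔ (∃ i, i ≠ j ∧ M i j = true) ∨ ∀ i, i ≠ j → M j i = false := by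
  constructor
  · intro hj
    by_cases hpart : ∃ i, i ≠ j ∧ P.part i = P.part j
    · obtain ⟨i, hij, hi⟩ := hpart
      exact Or.inl ⟨i, hij, (h.trust_iff hij).2 ⟨hi, hj⟩⟩
    · push Not at hpart
      refine Or.inr fun i hij ↦ Bool.eq_false_iff.2 fun hji ↦ ?_
      exact hpart i hij (h.part_eq_of_trust hji).symm
  · rintro (⟨i, hij, hi⟩ | hnone)
    · exact ((h.trust_iff hij).1 hi).2
    · obtain ⟨c, hcC, hcj⟩ := h.exists_core_part_eq j
      by_contra hj
      have hjc : j ≠ c := fun e ↦ hj (e ▸ hcC)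
      have htrust : M j c = true := (h.trust_iff hjc).2 ⟨hcj.symm, hcC⟩
      simp [hnone c hjc.symm] at htrust

theorem unique {P' : Finpartition (univ : Finset α)} {C' : Finset α}
    (h : IsFactionCore M P C) (h' : IsFactionCore M P' C') : P = P' ∧ C = C' := by
  refine ⟨Finpartition.eq_of_part_eq fun x ↦ Finset.ext fun y ↦ ?_, Finset.ext fun j ↦ ?_⟩
  · rw [P.mem_part_iff_part_eq_part (mem_univ y) (mem_univ x),
      P'.mem_part_iff_part_eq_part (mem_univ y) (mem_univ x), h.part_eq_iff, h'.part_eq_iff]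
  · rw [h.mem_core_iff, h'.mem_core_iff]

end IsFactionCore

theorem faction_core_unique_general {n : ℕ}
    (M : Fin n → Fin n → Bool)
    (P P' : Finpartition (Finset.univ : Finset (Fin n)))
    (C C' : Finset (Fin n))
    (hcore : ∀ F ∈ P.parts, (F ∩ C).Nonempty)
    (hchar : ∀ i j : Fin n, i ≠ j →
      (M i j = true ↔ (∃ F ∈ P.parts, i ∈ F ∧ j ∈ F) ∧ j ∈ C))
    (hcore' : ∀ F ∈ P'.parts, (F ∩ C').Nonempty)
    (hchar' : ∀ i j : Fin n, i ≠ j →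
      (M i j = true ↔ (∃ F ∈ P'.parts, i ∈ F ∧ j ∈ F) ∧ j ∈ C')) :
    P = P' ∧ C = C' :=
  IsFactionCore.unique ⟨hcore, hchar⟩ ⟨hcore', hchar'⟩

/-- Uniqueness of the faction/core data of an absorbing state. -/
theorem faction_core_unique {n : ℕ} (hn : 3 ≤ n)
    (M : Fin n → Fin n → Bool) (hdiag : ∀ i, M i i = false)
    (habs : Absorbing M)
    (P P' : Finpartition (Finset.univ : Finset (Fin n)))
    (C C' : Finset (Fin n))
    (hcore : ∀ F ∈ P.parts, (F ∩ C).Nonempty)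
    (hchar : ∀ i j : Fin n, i ≠ j →
      (M i j = true ↔ (∃ F ∈ P.parts, i ∈ F ∧ j ∈ F) ∧ j ∈ C))
    (hcore' : ∀ F ∈ P'.parts, (F ∩ C').Nonempty)
    (hchar' : ∀ i j : Fin n, i ≠ j →
      (M i j = true ↔ (∃ F ∈ P'.parts, i ∈ F ∧ j ∈ F) ∧ j ∈ C')) :
    P = P' ∧ C = C' :=
  faction_core_unique_general M P P' C C' hcore hchar hcore' hchar'
end

section
/- For a fixed finite partition P of Fin n into non-empty blocks, the number of absorbing states M : Fin n → Fin n → Bool whose characterization data has faction partition P (i.e. for which there exists a core set C meeting every block of P such that for all distinct i, j: M i j = true iff i, j lie in the same block of P and j ∈ C) equals the product over all blocks F of P of (2^{|F|} − 1). -/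
open Finset

namespace Finpartition

variable {α : Type*} [Fintype α] [DecidableEq α] (P : Finpartition (univ : Finset α))

lemma biUnion_inter_parts (C : Finset α) : P.parts.biUnion (· ∩ C) = C := by
  simpa [P.biUnion_parts] using (biUnion_inter P.parts id C).symm

lemma inter_biUnion_attach_of_subset {g : ∀ F ∈ P.parts, Finset α}
    (hsub : ∀ F (hF : F ∈ P.parts), g F hF ⊆ F) {F : Finset α} (hF : F ∈ P.parts) :
    F ∩ P.parts.attach.biUnion (fun F' => g F'.1 F'.2) = g F hF := by
  ext x
  simp only [mem_inter, mem_biUnion, mem_attach, true_and, Subtype.exists]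
  constructor
  · rintro ⟨hxF, F', hF', hxg⟩
    obtain rfl := P.eq_of_mem_parts hF hF' hxF (hsub F' hF' hxg)
    exact hxg
  · exact fun hx => ⟨hsub F hF hx, F, hF, hx⟩

theorem card_filter_forall_inter_nonempty :
    #{C : Finset α | ∀ F ∈ P.parts, (F ∩ C).Nonempty} = ∏ F ∈ P.parts, (2 ^ #F - 1) := by
  have hcard : #(P.parts.pi fun F => F.powerset.erase ∅) = ∏ F ∈ P.parts, (2 ^ #F - 1) := by
    simp only [card_pi, card_erase_of_mem (empty_mem_powerset _), card_powerset]
  rw [← hcard]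
  refine card_bij' (fun C _ F _ => F ∩ C) (fun g _ => P.parts.attach.biUnion fun F => g F.1 F.2)
    ?_ ?_ ?_ ?_
  · intro C hC
    simp only [mem_filter, mem_univ, true_and] at hC
    simpa [mem_pi, nonempty_iff_ne_empty] using hC
  · intro g hg
    have hsub : ∀ F (hF : F ∈ P.parts), g F hF ⊆ F := fun F hF =>
      mem_powerset.1 (mem_of_mem_erase (mem_pi.1 hg F hF))
    simp only [mem_filter, mem_univ, true_and]
    intro F hF
    rw [P.inter_biUnion_attach_of_subset hsub hF]
    exact nonempty_iff_ne_empty.2 (ne_of_mem_erase (mem_pi.1 hg F hF))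
  · intro C _
    exact attach_biUnion.trans (P.biUnion_inter_parts C)
  · intro g hg
    have hsub : ∀ F (hF : F ∈ P.parts), g F hF ⊆ F := fun F hF =>
      mem_powerset.1 (mem_of_mem_erase (mem_pi.1 hg F hF))
    funext F hF
    exact P.inter_biUnion_attach_of_subset hsub hF

end Finpartition

section FactionState

variable {n : ℕ} (P : Finpartition (univ : Finset (Fin n)))

def factionState (C : Finset (Fin n)) (i j : Fin n) : Bool :=
  decide (i ≠ j ∧ (∃ F ∈ P.parts, i ∈ F ∧ j ∈ F) ∧ j ∈ C)

variable {P}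

lemma factionState_self (C : Finset (Fin n)) (i : Fin n) : factionState P C i i = false := by
  simp [factionState]

lemma factionState_eq_true_iff {C : Finset (Fin n)} {i j : Fin n} (hij : i ≠ j) :
    factionState P C i j = true ↔ (∃ F ∈ P.parts, i ∈ F ∧ j ∈ F) ∧ j ∈ C := by
  simp [factionState, hij]

lemma absorbing_factionState (C : Finset (Fin n)) : Absorbing (factionState P C) := by
  intro a z y haz hay hzy hza
  obtain ⟨⟨F, hF, hzF, haF⟩, -⟩ := (factionState_eq_true_iff haz.symm).1 hza
  have hsame : ∀ x, (∃ F' ∈ P.parts, z ∈ F' ∧ x ∈ F') ↔ ∃ F' ∈ P.parts, a ∈ F' ∧ x ∈ F' := by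
    refine fun x => ⟨fun ⟨F', hF', hzF', hxF'⟩ => ?_, fun ⟨F', hF', haF', hxF'⟩ => ?_⟩
    · exact ⟨F', hF', P.eq_of_mem_parts hF hF' hzF hzF' ▸ haF, hxF'⟩
    · exact ⟨F', hF', P.eq_of_mem_parts hF hF' haF haF' ▸ hzF, hxF'⟩
  rw [Bool.eq_iff_iff, factionState_eq_true_iff hzy, factionState_eq_true_iff hay, hsame]

lemma factionState_injOn :
    Set.InjOn (factionState P) {C | ∀ F ∈ P.parts, (F ∩ C).Nonempty} := by
  intro C hC C' hC' h
  ext x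
  obtain ⟨F, hF, hxF⟩ := P.exists_mem (mem_univ x)
  by_cases hs : ∃ i ∈ F, i ≠ x
  · obtain ⟨i, hiF, hix⟩ := hs
    have hM := congrFun (congrFun h i) x
    rw [Bool.eq_iff_iff, factionState_eq_true_iff hix, factionState_eq_true_iff hix] at hM
    exact and_congr_right_iff.1 hM ⟨F, hF, hiF, hxF⟩
  · -- a singleton block `{x}` must meet both `C` and `C'`
    push Not at hs
    obtain ⟨y, hy⟩ := hC F hF
    obtain ⟨y', hy'⟩ := hC' F hF
    obtain ⟨hyF, hyC⟩ := mem_inter.1 hy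
    obtain ⟨hyF', hyC'⟩ := mem_inter.1 hy'
    exact iff_of_true (hs y hyF ▸ hyC) (hs y' hyF' ▸ hyC')

lemma setOf_characterized_eq_image_factionState :
    {M : Fin n → Fin n → Bool | (∀ i, M i i = false) ∧ Absorbing M ∧
      ∃ C : Finset (Fin n), (∀ F ∈ P.parts, (F ∩ C).Nonempty) ∧
        ∀ i j : Fin n, i ≠ j → (M i j = true ↔ (∃ F ∈ P.parts, i ∈ F ∧ j ∈ F) ∧ j ∈ C)} =
      factionState P '' {C | ∀ F ∈ P.parts, (F ∩ C).Nonempty} := by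
  ext M
  constructor
  · rintro ⟨hdiag, -, C, hC, hM⟩
    refine ⟨C, hC, funext₂ fun i j => ?_⟩
    by_cases hij : i = j
    · rw [hij, factionState_self, hdiag]
    · rw [Bool.eq_iff_iff, factionState_eq_true_iff hij, hM i j hij]
  · rintro ⟨C, hC, rfl⟩
    exact ⟨factionState_self C, absorbing_factionState C, C, hC,
      fun i j hij => factionState_eq_true_iff hij⟩

end FactionState

/-- For a fixed faction partition `P`, the number of absorbing states whose
characterization data has faction partition `P` equals `∏_{F ∈ P} (2^|F| - 1)`. -/
theorem card_absorbing_with_partition {n : ℕ}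
    (P : Finpartition (Finset.univ : Finset (Fin n))) :
    Nat.card {M : Fin n → Fin n → Bool //
      (∀ i, M i i = false) ∧ Absorbing M ∧
      ∃ C : Finset (Fin n), (∀ F ∈ P.parts, (F ∩ C).Nonempty) ∧
        ∀ i j : Fin n, i ≠ j →
          (M i j = true ↔ (∃ F ∈ P.parts, i ∈ F ∧ j ∈ F) ∧ j ∈ C)} =
    ∏ F ∈ P.parts, (2 ^ F.card - 1) := by
  rw [← Set.coe_ofPred, setOf_characterized_eq_image_factionState, Nat.card_coe_set_eq,
    factionState_injOn.ncard_image, ← P.card_filter_forall_inter_nonempty, ← Set.ncard_coe_finset,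
    coe_filter]
  simp only [mem_univ, true_and]
end

section
/- Corollary (Labeled count): for every n ≥ 1, the number of absorbing states M : Fin n → Fin n → Bool (with diagonal fixed to false) equals the sum, over all finite partitions P of Fin n into non-empty blocks, of the product over all blocks F of P of (2^{|F|} − 1). In symbols: |{M absorbing}| = Σ_{P} Π_{F ∈ P} (2^{|F|} − 1), where P ranges over all Finpartitions of the universal finset of Fin n. -/
namespace AbsCount

open Finset

variable {n : ℕ}

/-- The "opinion set" of agent `i`: the agents `i` trusts, together with `i` itself
if someone trusts `i`. -/
def Sset (M : Fin n → Fin n → Bool) (i : Fin n) : Finset (Fin n) :=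
  (univ.filter fun j => M i j = true) ∪ (if ∃ z, M z i = true then {i} else ∅)

lemma mem_Sset {M : Fin n → Fin n → Bool} {i j : Fin n} :
    j ∈ Sset M i ↔ M i j = true ∨ (j = i ∧ ∃ z, M z i = true) := by
  by_cases h : ∃ z, M z i = true <;> simp [Sset, h] <;> exact Or.comm

/-- Two agents are related if they have the same nonempty opinion set. -/
def relS (M : Fin n → Fin n → Bool) (i j : Fin n) : Prop :=
  i = j ∨ (Sset M i = Sset M j ∧ (Sset M i).Nonempty)

instance (M : Fin n → Fin n → Bool) : DecidableRel (relS M) := fun _ _ => by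
  unfold relS; infer_instance

def setoidS (M : Fin n → Fin n → Bool) : Setoid (Fin n) where
  r := relS M
  iseqv := by
    constructor
    · exact fun _ => Or.inl rfl
    · rintro i j (rfl | ⟨he, hne⟩)
      · exact Or.inl rfl
      · exact Or.inr ⟨he.symm, he ▸ hne⟩
    · rintro i j k (rfl | ⟨he, hne⟩) h2
      · exact h2
      · rcases h2 with rfl | ⟨he2, _⟩
        · exact Or.inr ⟨he, hne⟩
        · exact Or.inr ⟨he.trans he2, hne⟩

instance (M : Fin n → Fin n → Bool) : DecidableRel (setoidS M).r := fun i j =>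
  inferInstanceAs (Decidable (relS M i j))

/-- The partition of agents induced by an absorbing state. -/
def pt (M : Fin n → Fin n → Bool) : Finpartition (univ : Finset (Fin n)) :=
  Finpartition.ofSetoid (setoidS M)

lemma mem_part_pt {M : Fin n → Fin n → Bool} {i j : Fin n} :
    j ∈ (pt M).part i ↔ relS M i j :=
  Finpartition.mem_part_ofSetoid_iff_rel

/-- Key lemma: in an absorbing state, a truster has the same opinion set as the trustee. -/
lemma Sset_eq_of_trust {M : Fin n → Fin n → Bool} (hd : ∀ i, M i i = false)
    (hM : Absorbing M) {z a : Fin n} (h : M z a = true) : Sset M z = Sset M a := by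
  have hza : z ≠ a := by rintro rfl; rw [hd] at h; exact Bool.false_ne_true h
  ext j
  rcases eq_or_ne j a with rfl | hja
  · constructor
    · intro _; exact mem_Sset.mpr (Or.inr ⟨rfl, z, h⟩)
    · intro _; exact mem_Sset.mpr (Or.inl h)
  rcases eq_or_ne j z with rfl | hjz
  · constructor
    · intro hm
      rcases mem_Sset.mp hm with hjj | ⟨-, w, hw⟩
      · rw [hd] at hjj; exact absurd hjj Bool.false_ne_true
      · -- someone trusts j; show M a j = true hence j ∈ Sset M a
        have haj : M a j = true := by
          rcases eq_or_ne w a with rfl | hwa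
          · exact hw
          · have hwj : w ≠ j := by rintro rfl; rw [hd] at hw; exact Bool.false_ne_true hw
            have h1 : M w a = M j a := hM j w a (fun e => hwj e.symm) hza hwa hw
            have h2 : M w a = true := h1.trans h
            have h3 : M w j = M a j := hM a w j (fun e => hwa e.symm) (fun e => hza e.symm)
              hwj h2
            exact h3 ▸ hw
        exact mem_Sset.mpr (Or.inl haj)
    · intro hm
      rcases mem_Sset.mp hm with haj | ⟨hja', -⟩
      · exact mem_Sset.mpr (Or.inr ⟨rfl, a, haj⟩)
      · exact absurd hja' hza
  · have hr : M z j = M a j := hM a z j (fun e => hza e.symm) (fun e => hja e.symm)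
      (fun e => hjz e.symm) h
    simp [mem_Sset, hja, hjz, hr]

/-- The canonical choice of a nonempty subset in each part: the agents trusted by someone,
or the whole part if nobody in it is trusted. -/
def Sof (M : Fin n → Fin n → Bool) (F : Finset (Fin n)) : Finset (Fin n) :=
  if (F.filter fun j => ∃ z, M z j = true).Nonempty then F.filter fun j => ∃ z, M z j = true
  else F

lemma Sof_subset (M : Fin n → Fin n → Bool) (F : Finset (Fin n)) : Sof M F ⊆ F := by
  unfold Sof; split_ifs with h
  · exact filter_subset _ _
  · exact subset_rfl

lemma Sof_nonempty (M : Fin n → Fin n → Bool) {F : Finset (Fin n)} (hF : F.Nonempty) :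
    (Sof M F).Nonempty := by
  unfold Sof; split_ifs with h
  · exact h
  · exact hF

/-- The reconstruction lemma: an absorbing state is determined by its partition and
the canonical subsets. -/
lemma M_eq_iff {M : Fin n → Fin n → Bool} (hd : ∀ i, M i i = false) (hM : Absorbing M)
    (i j : Fin n) : M i j = true ↔ j ≠ i ∧ j ∈ Sof M ((pt M).part i) := by
  by_cases hS : (Sset M i).Nonempty
  · -- the part of i consists of agents with the same Sset, and the trusted ones form Sset M i
    have hTS : ((pt M).part i).filter (fun j => ∃ z, M z j = true) = Sset M i := by
      ext k
      simp only [mem_filter, mem_part_pt]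
      constructor
      · rintro ⟨hrel, w, hw⟩
        rcases hrel with rfl | ⟨hSS, -⟩
        · exact mem_Sset.mpr (Or.inr ⟨rfl, w, hw⟩)
        · exact hSS ▸ mem_Sset.mpr (Or.inr ⟨rfl, w, hw⟩)
      · intro hk
        rcases mem_Sset.mp hk with hik | ⟨rfl, htr⟩
        · have hki : k ≠ i := by rintro rfl; rw [hd] at hik; exact Bool.false_ne_true hik
          have hSS := Sset_eq_of_trust hd hM hik
          exact ⟨Or.inr ⟨hSS, hS⟩, i, hik⟩
        · exact ⟨Or.inl rfl, htr⟩
    have hSof : Sof M ((pt M).part i) = Sset M i := by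
      unfold Sof
      rw [hTS]
      exact if_pos hS
    rw [hSof]
    constructor
    · intro hij
      have hji : j ≠ i := by rintro rfl; rw [hd] at hij; exact Bool.false_ne_true hij
      exact ⟨hji, mem_Sset.mpr (Or.inl hij)⟩
    · rintro ⟨hji, hj⟩
      rcases mem_Sset.mp hj with hij | ⟨rfl, -⟩
      · exact hij
      · exact absurd rfl hji
  · -- Sset M i is empty: i is isolated, its part is {i} and nothing is trusted there
    rw [not_nonempty_iff_eq_empty] at hS
    have hpart : (pt M).part i = {i} := by
      ext k
      rw [mem_part_pt, mem_singleton]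
      constructor
      · rintro (rfl | ⟨-, hne⟩)
        · rfl
        · rw [hS] at hne; exact absurd hne (by simp)
      · rintro rfl; exact Or.inl rfl
    have hMij : M i j = false := by
      by_contra hc
      rw [Bool.not_eq_false] at hc
      have : j ∈ Sset M i := mem_Sset.mpr (Or.inl hc)
      rw [hS] at this; exact absurd this (notMem_empty _)
    have hntr : ¬ ∃ z, M z i = true := by
      rintro ⟨w, hw⟩
      have : i ∈ Sset M i := mem_Sset.mpr (Or.inr ⟨rfl, w, hw⟩)
      rw [hS] at this; exact absurd this (notMem_empty _)
    have hSof : Sof M ((pt M).part i) = {i} := by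
      unfold Sof
      rw [hpart]
      have : ({i} : Finset (Fin n)).filter (fun j => ∃ z, M z j = true) = ∅ := by
        rw [filter_eq_empty_iff]
        intro k hk
        rw [mem_singleton] at hk
        subst hk
        exact hntr
      rw [this]
      simp
    rw [hSof, hMij]
    simp only [mem_singleton]
    constructor
    · intro hc; exact absurd hc Bool.false_ne_true
    · rintro ⟨hji, rfl⟩; exact absurd rfl hji

/-- Build an absorbing state from a partition and a choice of subset in each part. -/
def MofP (P : Finpartition (univ : Finset (Fin n))) (f : ∀ F ∈ P.parts, Finset (Fin n)) :
    Fin n → Fin n → Bool :=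
  fun i j => decide (j ≠ i ∧ j ∈ f (P.part i) (P.part_mem.mpr (mem_univ i)))

lemma f_congr {P : Finpartition (univ : Finset (Fin n))} (f : ∀ F ∈ P.parts, Finset (Fin n))
    {F G : Finset (Fin n)} (h : F = G) (hF : F ∈ P.parts) (hG : G ∈ P.parts) :
    f F hF = f G hG := by subst h; rfl

lemma MofP_eq_iff {P : Finpartition (univ : Finset (Fin n))}
    {f : ∀ F ∈ P.parts, Finset (Fin n)} {i j : Fin n} :
    MofP P f i j = true ↔ j ≠ i ∧ j ∈ f (P.part i) (P.part_mem.mpr (mem_univ i)) := by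
  simp [MofP]

lemma diag_MofP (P : Finpartition (univ : Finset (Fin n))) (f : ∀ F ∈ P.parts, Finset (Fin n))
    (i : Fin n) : MofP P f i i = false := by
  simp [MofP]

lemma part_eq_part_of_mem_f {P : Finpartition (univ : Finset (Fin n))}
    {f : ∀ F ∈ P.parts, Finset (Fin n)} (hf : ∀ F (hF : F ∈ P.parts), f F hF ⊆ F)
    {z a : Fin n} (ha : a ∈ f (P.part z) (P.part_mem.mpr (mem_univ z))) : P.part a = P.part z := by
  have : a ∈ P.part z := hf _ _ ha
  exact (P.mem_part_iff_part_eq_part (mem_univ a) (mem_univ z)).mp this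

lemma absorbing_MofP (P : Finpartition (univ : Finset (Fin n)))
    (f : ∀ F ∈ P.parts, Finset (Fin n)) (hf : ∀ F (hF : F ∈ P.parts), f F hF ⊆ F) :
    Absorbing (MofP P f) := by
  intro a z y haz hay hzy htr
  rw [MofP_eq_iff] at htr
  have hpa : P.part a = P.part z := part_eq_part_of_mem_f hf htr.2
  have hfa : f (P.part a) (P.part_mem.mpr (mem_univ a)) = f (P.part z) (P.part_mem.mpr (mem_univ z)) :=
    f_congr f hpa _ _
  show decide _ = decide _
  rw [decide_eq_decide]
  rw [hfa]
  constructor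
  · rintro ⟨-, hy⟩; exact ⟨fun e => hay (e.symm), hy⟩
  · rintro ⟨-, hy⟩; exact ⟨fun e => hzy (e.symm), hy⟩

lemma trusted_MofP {P : Finpartition (univ : Finset (Fin n))}
    {f : ∀ F ∈ P.parts, Finset (Fin n)} (hf : ∀ F (hF : F ∈ P.parts), f F hF ⊆ F)
    {j : Fin n} : (∃ z, MofP P f z j = true) ↔
      (j ∈ f (P.part j) (P.part_mem.mpr (mem_univ j)) ∧ ∃ k ∈ P.part j, k ≠ j) := by
  constructor
  · rintro ⟨z, hz⟩
    rw [MofP_eq_iff] at hz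
    obtain ⟨hjz, hjf⟩ := hz
    have hpj : P.part j = P.part z := part_eq_part_of_mem_f hf hjf
    refine ⟨?_, z, ?_, fun e => hjz e.symm⟩
    · rw [f_congr f hpj (P.part_mem.mpr (mem_univ j)) (P.part_mem.mpr (mem_univ z))]; exact hjf
    · rw [hpj]; exact P.mem_part (mem_univ z)
  · rintro ⟨hjf, k, hk, hkj⟩
    refine ⟨k, MofP_eq_iff.mpr ⟨fun e => hkj e.symm, ?_⟩⟩
    have hpk : P.part k = P.part j := (P.mem_part_iff_part_eq_part (mem_univ k) (mem_univ j)).mp hk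
    rw [f_congr f hpk (P.part_mem.mpr (mem_univ k)) (P.part_mem.mpr (mem_univ j))]
    exact hjf

lemma Sset_MofP_of_two {P : Finpartition (univ : Finset (Fin n))}
    {f : ∀ F ∈ P.parts, Finset (Fin n)} (hf : ∀ F (hF : F ∈ P.parts), f F hF ⊆ F)
    {i : Fin n} (h2 : ∃ k ∈ P.part i, k ≠ i) :
    Sset (MofP P f) i = f (P.part i) (P.part_mem.mpr (mem_univ i)) := by
  ext j
  rw [mem_Sset, MofP_eq_iff, trusted_MofP hf]
  rcases eq_or_ne j i with rfl | hji
  · simp only [ne_eq, not_true_eq_false, false_and, false_or, true_and]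
    constructor
    · rintro ⟨hj, -⟩; exact hj
    · intro hj; exact ⟨hj, h2⟩
  · simp [hji]

lemma Sset_MofP_of_singleton {P : Finpartition (univ : Finset (Fin n))}
    {f : ∀ F ∈ P.parts, Finset (Fin n)} (hf : ∀ F (hF : F ∈ P.parts), f F hF ⊆ F)
    {i : Fin n} (h1 : ¬ ∃ k ∈ P.part i, k ≠ i) :
    Sset (MofP P f) i = ∅ := by
  have hpart : P.part i = {i} := by
    ext k
    rw [mem_singleton]
    constructor
    · intro hk; by_contra hne; exact h1 ⟨k, hk, hne⟩
    · rintro rfl; exact P.mem_part (mem_univ _)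
  rw [eq_empty_iff_forall_notMem]
  intro j hj
  rcases mem_Sset.mp hj with hij | ⟨rfl, htr⟩
  · rw [MofP_eq_iff] at hij
    have : j ∈ P.part i := hf _ _ hij.2
    rw [hpart, mem_singleton] at this
    exact hij.1 this
  · rw [trusted_MofP hf] at htr
    exact h1 htr.2

lemma relS_MofP {P : Finpartition (univ : Finset (Fin n))}
    {f : ∀ F ∈ P.parts, Finset (Fin n)} (hf : ∀ F (hF : F ∈ P.parts), f F hF ⊆ F)
    (hfne : ∀ F (hF : F ∈ P.parts), (f F hF).Nonempty) (i j : Fin n) :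
    relS (MofP P f) i j ↔ j ∈ P.part i := by
  constructor
  · rintro (rfl | ⟨hSS, hne⟩)
    · exact P.mem_part (mem_univ i)
    · have h2i : ∃ k ∈ P.part i, k ≠ i := by
        by_contra hc
        rw [Sset_MofP_of_singleton hf hc] at hne
        exact absurd hne (by simp)
      have h2j : ∃ k ∈ P.part j, k ≠ j := by
        by_contra hc
        rw [hSS, Sset_MofP_of_singleton hf hc] at hne
        exact absurd hne (by simp)
      rw [Sset_MofP_of_two hf h2i, Sset_MofP_of_two hf h2j] at hSS
      obtain ⟨x, hx⟩ := hfne (P.part i) (P.part_mem.mpr (mem_univ i))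
      have hx2 : x ∈ f (P.part j) (P.part_mem.mpr (mem_univ j)) := hSS ▸ hx
      have hxi : x ∈ P.part i := hf _ _ hx
      have hxj : x ∈ P.part j := hf _ _ hx2
      have : P.part i = P.part j :=
        P.eq_of_mem_parts (P.part_mem.mpr (mem_univ i)) (P.part_mem.mpr (mem_univ j)) hxi hxj
      rw [this]
      exact P.mem_part (mem_univ j)
  · intro hj
    rcases eq_or_ne i j with rfl | hij
    · exact Or.inl rfl
    · have hpj : P.part j = P.part i :=
        (P.mem_part_iff_part_eq_part (mem_univ j) (mem_univ i)).mp hj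
      have h2i : ∃ k ∈ P.part i, k ≠ i := ⟨j, hj, fun e => hij e.symm⟩
      have h2j : ∃ k ∈ P.part j, k ≠ j := ⟨i, hpj ▸ P.mem_part (mem_univ i), hij⟩
      refine Or.inr ⟨?_, ?_⟩
      · rw [Sset_MofP_of_two hf h2i, Sset_MofP_of_two hf h2j]
        exact f_congr f hpj.symm _ _
      · rw [Sset_MofP_of_two hf h2i]
        exact hfne _ _

lemma part_ext {α : Type*} [DecidableEq α] [Fintype α]
    {P Q : Finpartition (univ : Finset α)} (h : ∀ a, P.part a = Q.part a) : P = Q := by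
  apply Finpartition.ext
  ext F
  constructor
  · intro hF
    obtain ⟨x, -, hx⟩ := P.part_surjOn hF
    rw [← hx, h]
    exact Q.part_mem.mpr (mem_univ x)
  · intro hF
    obtain ⟨x, -, hx⟩ := Q.part_surjOn hF
    rw [← hx, ← h]
    exact P.part_mem.mpr (mem_univ x)

lemma pt_MofP {P : Finpartition (univ : Finset (Fin n))}
    {f : ∀ F ∈ P.parts, Finset (Fin n)} (hf : ∀ F (hF : F ∈ P.parts), f F hF ⊆ F)
    (hfne : ∀ F (hF : F ∈ P.parts), (f F hF).Nonempty) :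
    pt (MofP P f) = P := by
  apply part_ext
  intro a
  ext j
  rw [mem_part_pt, relS_MofP hf hfne]

lemma Sof_MofP {P : Finpartition (univ : Finset (Fin n))}
    {f : ∀ F ∈ P.parts, Finset (Fin n)} (hf : ∀ F (hF : F ∈ P.parts), f F hF ⊆ F)
    (hfne : ∀ F (hF : F ∈ P.parts), (f F hF).Nonempty)
    {F : Finset (Fin n)} (hF : F ∈ P.parts) :
    Sof (MofP P f) F = f F hF := by
  obtain ⟨x, hx⟩ := P.nonempty_of_mem_parts hF
  have hpx : P.part x = F := P.part_eq_of_mem hF hx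
  by_cases h2 : ∃ k ∈ F, k ≠ x
  · -- F has at least two elements; the trusted agents in F are exactly f F
    have hfilter : (F.filter fun j => ∃ z, MofP P f z j = true) = f F hF := by
      ext j
      rw [mem_filter, trusted_MofP hf]
      constructor
      · rintro ⟨hjF, hjf, -⟩
        have hpj : P.part j = F := P.part_eq_of_mem hF hjF
        rwa [f_congr f hpj (P.part_mem.mpr (mem_univ j)) hF] at hjf
      · intro hj
        have hjF : j ∈ F := hf F hF hj
        have hpj : P.part j = F := P.part_eq_of_mem hF hjF
        refine ⟨hjF, ?_, ?_⟩
        · rwa [f_congr f hpj (P.part_mem.mpr (mem_univ j)) hF]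
        · obtain ⟨k, hkF, hkx⟩ := h2
          rcases eq_or_ne j x with rfl | hjx
          · exact ⟨k, hpj ▸ hkF, hkx⟩
          · exact ⟨x, hpj ▸ hx, fun e => hjx e.symm⟩
    unfold Sof
    rw [hfilter, if_pos (hfne F hF)]
  · -- F = {x}
    have hFx : F = {x} := by
      ext k
      rw [mem_singleton]
      constructor
      · intro hk; by_contra hne; exact h2 ⟨k, hk, hne⟩
      · rintro rfl; exact hx
    have hfFx : f F hF = {x} := by
      have hsub : f F hF ⊆ {x} := hFx ▸ hf F hF
      obtain ⟨y, hy⟩ := hfne F hF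
      have : y = x := mem_singleton.mp (hsub hy)
      subst this
      exact Subset.antisymm hsub (singleton_subset_iff.mpr hy)
    have hfilter : (F.filter fun j => ∃ z, MofP P f z j = true) = ∅ := by
      rw [filter_eq_empty_iff]
      intro k hk
      have hkx : k = x := by rw [hFx, mem_singleton] at hk; exact hk
      subst hkx
      rw [trusted_MofP hf]
      rintro ⟨-, m, hm, hmk⟩
      rw [hpx] at hm
      exact h2 ⟨m, hm, hmk⟩
    unfold Sof
    rw [hfilter, if_neg (by simp), hfFx, hFx]

/-- Sigma extensionality for partition-indexed data. -/
lemma sigma_ext {x y : Σ P : Finpartition (univ : Finset (Fin n)), ∀ F ∈ P.parts, Finset (Fin n)}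
    (h1 : x.1 = y.1) (h2 : ∀ F (hx : F ∈ x.1.parts) (hy : F ∈ y.1.parts), x.2 F hx = y.2 F hy) :
    x = y := by
  obtain ⟨a, f⟩ := x
  obtain ⟨b, g⟩ := y
  dsimp at h1
  subst h1
  have : f = g := by
    funext F hF
    exact h2 F hF hF
  rw [this]

end AbsCount

instance {n : ℕ} (M : Fin n → Fin n → Bool) : Decidable (Absorbing M) := by
  unfold Absorbing; infer_instance

open Finset AbsCount

/-- Labeled count: the number of absorbing states on `n` labeled agents equals
`Σ_P Π_{F ∈ P} (2^|F| - 1)`, summing over all set partitions `P` of `Fin n`. -/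
theorem card_absorbing_eq_sum {n : ℕ} (hn : 1 ≤ n) :
    Nat.card {M : Fin n → Fin n → Bool // (∀ i, M i i = false) ∧ Absorbing M} =
    ∑ P : Finpartition (Finset.univ : Finset (Fin n)),
      ∏ F ∈ P.parts, (2 ^ F.card - 1) := by
  classical
  rw [Nat.card_eq_fintype_card, Fintype.card_subtype]
  have hR : ∀ P : Finpartition (univ : Finset (Fin n)),
      ∏ F ∈ P.parts, (2 ^ F.card - 1) = (P.parts.pi fun F => F.powerset.erase ∅).card := by
    intro P
    rw [Finset.card_pi]
    refine Finset.prod_congr rfl fun F hF => ?_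
    rw [card_erase_of_mem (empty_mem_powerset F), card_powerset]
  simp_rw [hR]
  rw [← Finset.card_sigma]
  apply Finset.card_bij
    (fun M _ => (⟨pt M, fun F _ => Sof M F⟩ :
      Σ P : Finpartition (univ : Finset (Fin n)), ∀ F ∈ P.parts, Finset (Fin n)))
  · -- maps to
    intro M hM
    rw [mem_filter] at hM
    rw [mem_sigma, mem_pi]
    refine ⟨mem_univ _, fun F hF => ?_⟩
    rw [mem_erase, mem_powerset]
    have hFne : F.Nonempty := (pt M).nonempty_of_mem_parts hF
    refine ⟨?_, Sof_subset M F⟩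
    rw [← nonempty_iff_ne_empty]
    exact Sof_nonempty M hFne
  · -- injective
    intro M hM M' hM' h
    rw [mem_filter] at hM hM'
    obtain ⟨-, hd, habs⟩ := hM
    obtain ⟨-, hd', habs'⟩ := hM'
    have h1 : pt M = pt M' := congrArg Sigma.fst h
    have h2 : ∀ F, F ∈ (pt M).parts → Sof M F = Sof M' F := by
      intro F hF
      have := congrArg (fun x : Σ P : Finpartition (univ : Finset (Fin n)),
          ∀ F ∈ P.parts, Finset (Fin n) =>
          if hmem : F ∈ x.1.parts then x.2 F hmem else ∅) h
      dsimp at this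
      rwa [if_pos hF, if_pos (h1 ▸ hF)] at this
    funext i j
    apply Bool.eq_iff_iff.mpr
    rw [M_eq_iff hd habs, M_eq_iff hd' habs']
    have hpart : (pt M).part i = (pt M').part i := by rw [h1]
    rw [← hpart, h2 _ ((pt M).part_mem.mpr (mem_univ i))]
  · -- surjective
    rintro ⟨P, f⟩ hb
    rw [mem_sigma, mem_pi] at hb
    have hf : ∀ F (hF : F ∈ P.parts), f F hF ⊆ F := by
      intro F hF
      have := hb.2 F hF
      rw [mem_erase, mem_powerset] at this
      exact this.2
    have hfne : ∀ F (hF : F ∈ P.parts), (f F hF).Nonempty := by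
      intro F hF
      have := hb.2 F hF
      rw [mem_erase, mem_powerset] at this
      exact nonempty_iff_ne_empty.mpr this.1
    refine ⟨MofP P f, ?_, ?_⟩
    · rw [mem_filter]
      exact ⟨mem_univ _, diag_MofP P f, absorbing_MofP P f hf⟩
    · have hP : pt (MofP P f) = P := pt_MofP hf hfne
      apply sigma_ext hP
      intro F hx hy
      exact Sof_MofP hf hfne hy
end

section
/- Corollary (Exponential generating function): let a(n) denote the number of absorbing states M : Fin n → Fin n → Bool (with diagonal fixed to false), and set a(0) = 1. Then in the ring of formal power series ℚ⟦X⟧, the exponential generating function Σ_{n ≥ 0} a(n) X^n / n! equals exp(f) where f = exp(2X) − exp(X) (i.e. f = rescale 2 (exp ℚ) − exp ℚ, a series with zero constant term, and exp(f) denotes the substitution of f into the exponential power series). Equivalently, Σ_{n ≥ 0} a(n) X^n / n! = exp(e^X · (e^X − 1)). -/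
open PowerSeries

/-- The number of absorbing states on `n` labeled agents (for `n = 0` this
equals `1`, the unique empty state being vacuously absorbing). -/
noncomputable def numAbsorbing (n : ℕ) : ℕ :=
  Nat.card {M : Fin n → Fin n → Bool // (∀ i, M i i = false) ∧ Absorbing M}

/-- Substitution of the power series `f` (assumed to have zero constant term)
into the power series `g`: the coefficient of `X^n` in `g ∘ f` only involves
the powers `f^k` for `k ≤ n`, since `f` has positive order. -/
noncomputable def substInto (f g : PowerSeries ℚ) : PowerSeries ℚ :=
  PowerSeries.mk fun n =>
    coeff (R := ℚ) n (∑ k ∈ Finset.range (n + 1), C (R := ℚ) (coeff (R := ℚ) k g) * f ^ k)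

/-- Good functions: encode a partition with a chosen nonempty subset per block. -/
def GoodFun (α : Type*) [Fintype α] [DecidableEq α] : Type _ :=
  {f : α → Finset α // ∀ z, (f z).Nonempty ∧ ∀ y ∈ f z, f y = f z}

variable {n : ℕ}

/-- From an absorbing state, the canonical good function. -/
def toGood (M : Fin n → Fin n → Bool) (z : Fin n) : Finset (Fin n) :=
  Finset.univ.filter (fun a => M z a = true ∨
    (a = z ∧ ((∀ b, M z b = false) ∨ ∃ b, M b z = true)))

lemma mem_toGood {M : Fin n → Fin n → Bool} {z a : Fin n} :
    a ∈ toGood M z ↔ (M z a = true ∨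
      (a = z ∧ ((∀ b, M z b = false) ∨ ∃ b, M b z = true))) := by
  simp [toGood]

/-- key: if `z` trusts `a` and someone trusts `z`, then `a` trusts `z`. -/
lemma trusts_back {M : Fin n → Fin n → Bool} (hd : ∀ i, M i i = false)
    (hM : Absorbing M) {z a b : Fin n} (hza : M z a = true) (hbz : M b z = true) :
    M a z = true := by
  have hzane : a ≠ z := by rintro rfl; rw [hd] at hza; exact Bool.false_ne_true hza
  have hbzne : b ≠ z := by rintro rfl; rw [hd] at hbz; exact Bool.false_ne_true hbz
  by_cases hba : b = a
  · exact hba ▸ hbz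
  · -- M b z, so rows b, z agree off {b,z}; hence M b a = M z a = true
    have h1 : M b a = M z a := hM z b a (Ne.symm hbzne) (Ne.symm hzane) hba hbz
    have h2 : M b z = M a z := hM a b z (fun h => hba h.symm) hzane hbzne (h1.trans hza)
    exact h2.symm.trans hbz

lemma toGood_eq {M : Fin n → Fin n → Bool} (hd : ∀ i, M i i = false)
    (hM : Absorbing M) {z a : Fin n} (hza : M z a = true) :
    toGood M z = toGood M a := by
  have hzane : a ≠ z := by rintro rfl; rw [hd] at hza; exact Bool.false_ne_true hza
  ext y
  rw [mem_toGood, mem_toGood]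
  rcases eq_or_ne y z with rfl | hyz
  · -- y = z
    constructor
    · rintro (h | ⟨-, h | ⟨b, hb⟩⟩)
      · rw [hd] at h; exact absurd h Bool.false_ne_true
      · exact absurd (h a) (by simp [hza])
      · exact Or.inl (trusts_back hd hM hza hb)
    · rintro (h | ⟨h, -⟩)
      · exact Or.inr ⟨rfl, Or.inr ⟨a, h⟩⟩
      · exact absurd h hzane.symm
  · rcases eq_or_ne y a with rfl | hya
    · -- y = a
      constructor
      · intro _; exact Or.inr ⟨rfl, Or.inr ⟨z, hza⟩⟩
      · intro _; exact Or.inl hza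
    · -- y ∉ {z, a}
      have key : M z y = M a y := hM a z y hzane (Ne.symm hya) (Ne.symm hyz) hza
      constructor
      · rintro (h | ⟨h, -⟩)
        · exact Or.inl (key ▸ h)
        · exact absurd h hyz
      · rintro (h | ⟨h, -⟩)
        · exact Or.inl (key.trans h)
        · exact absurd h hya

lemma toGood_good {M : Fin n → Fin n → Bool} (hd : ∀ i, M i i = false)
    (hM : Absorbing M) :
    ∀ z, (toGood M z).Nonempty ∧ ∀ y ∈ toGood M z, toGood M y = toGood M z := by
  intro z
  constructor
  · by_cases h : ∀ b, M z b = false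
    · exact ⟨z, mem_toGood.2 (Or.inr ⟨rfl, Or.inl h⟩)⟩
    · push_neg at h
      obtain ⟨b, hb⟩ := h
      exact ⟨b, mem_toGood.2 (Or.inl (Bool.of_not_eq_false hb))⟩
  · intro y hy
    rcases mem_toGood.1 hy with h | ⟨rfl, -⟩
    · exact (toGood_eq hd hM h).symm
    · rfl

def ofGood (f : Fin n → Finset (Fin n)) (z a : Fin n) : Bool :=
  decide (a ∈ f z ∧ a ≠ z)

lemma ofGood_eq_true {f : Fin n → Finset (Fin n)} {z a : Fin n} :
    ofGood f z a = true ↔ (a ∈ f z ∧ a ≠ z) := by simp [ofGood]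

lemma ofGood_diag (f : Fin n → Finset (Fin n)) : ∀ i, ofGood f i i = false := by
  intro i; simp [ofGood]

lemma ofGood_absorbing {f : Fin n → Finset (Fin n)}
    (hf : ∀ z, (f z).Nonempty ∧ ∀ y ∈ f z, f y = f z) : Absorbing (ofGood f) := by
  intro a z y haz hay hzy h
  obtain ⟨hafz, _⟩ := ofGood_eq_true.1 h
  have : f a = f z := (hf z).2 a hafz
  simp only [ofGood, this]
  by_cases hy : y ∈ f z
  · simp [hy, Ne.symm hzy, Ne.symm hay]
  · simp [hy]

lemma toGood_ofGood {f : Fin n → Finset (Fin n)}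
    (hf : ∀ z, (f z).Nonempty ∧ ∀ y ∈ f z, f y = f z) : toGood (ofGood f) = f := by
  funext z
  ext a
  rw [mem_toGood, ofGood_eq_true]
  rcases eq_or_ne a z with rfl | haz
  · simp only [ne_eq, not_true_eq_false, and_false, false_or, true_and]
    constructor
    · rintro (hE | ⟨b, hb⟩)
      · -- all of f a ⊆ {a}, and f a nonempty, so a ∈ f a
        obtain ⟨c, hc⟩ := (hf a).1
        have := hE c
        simp only [ofGood, decide_eq_false_iff_not, not_and, not_not] at this
        rcases eq_or_ne c a with rfl | hca
        · exact hc
        · exact absurd (this hc) hca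
      · obtain ⟨hafb, hab⟩ := ofGood_eq_true.1 hb
        have := (hf b).2 a hafb
        rw [this]; exact hafb
    · intro hafa
      by_cases hsub : ∃ b ∈ f a, b ≠ a
      · obtain ⟨b, hb, hba⟩ := hsub
        refine Or.inr ⟨b, ofGood_eq_true.2 ⟨?_, hba.symm⟩⟩
        rw [(hf a).2 b hb]; exact hafa
      · push_neg at hsub
        refine Or.inl fun b => ?_
        simp only [ofGood, decide_eq_false_iff_not, not_and, not_not]
        intro hbfa; exact hsub b hbfa
  · simp [haz]

lemma ofGood_toGood {M : Fin n → Fin n → Bool} (hd : ∀ i, M i i = false)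
    (hM : Absorbing M) : ofGood (toGood M) = M := by
  funext z a
  rcases eq_or_ne a z with rfl | haz
  · rw [ofGood_diag, hd]
  · rcases hMza : M z a with _ | _
    · simp only [ofGood, decide_eq_false_iff_not, not_and, not_not]
      intro ha
      rcases mem_toGood.1 ha with h | ⟨h, -⟩
      · exact absurd h (by simp [hMza])
      · exact absurd h haz
    · exact ofGood_eq_true.2 ⟨mem_toGood.2 (Or.inl hMza), haz⟩

noncomputable def absEquivGood :
    {M : Fin n → Fin n → Bool // (∀ i, M i i = false) ∧ Absorbing M} ≃ GoodFun (Fin n) where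
  toFun := fun ⟨M, hd, hM⟩ => ⟨toGood M, toGood_good hd hM⟩
  invFun := fun ⟨f, hf⟩ => ⟨ofGood f, ofGood_diag f, ofGood_absorbing hf⟩
  left_inv := fun ⟨M, hd, hM⟩ => Subtype.ext (ofGood_toGood hd hM)
  right_inv := fun ⟨f, hf⟩ => Subtype.ext (toGood_ofGood hf)

noncomputable def numGood (m : ℕ) : ℕ := Nat.card (GoodFun (Fin m))

lemma numAbsorbing_eq_numGood (m : ℕ) :
    Nat.card {M : Fin m → Fin m → Bool // (∀ i, M i i = false) ∧ Absorbing M} = numGood m :=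
  Nat.card_congr absEquivGood

def GoodFun.congr {α β : Type*} [Fintype α] [DecidableEq α] [Fintype β] [DecidableEq β]
    (e : α ≃ β) : GoodFun α ≃ GoodFun β where
  toFun := fun ⟨f, hf⟩ => ⟨fun b => (f (e.symm b)).map e.toEmbedding, by
    intro z
    refine ⟨((hf (e.symm z)).1).map (f := e.toEmbedding), ?_⟩
    intro y hy
    simp only [Finset.mem_map, Equiv.coe_toEmbedding] at hy
    obtain ⟨c, hc, rfl⟩ := hy
    simp only [e.symm_apply_apply]
    rw [(hf (e.symm z)).2 c hc]⟩
  invFun := fun ⟨f, hf⟩ => ⟨fun a => (f (e a)).map e.symm.toEmbedding, by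
    intro z
    refine ⟨((hf (e z)).1).map (f := e.symm.toEmbedding), ?_⟩
    intro y hy
    simp only [Finset.mem_map, Equiv.coe_toEmbedding] at hy
    obtain ⟨c, hc, rfl⟩ := hy
    simp only [e.apply_symm_apply]
    rw [(hf (e z)).2 c hc]⟩
  left_inv := fun ⟨f, hf⟩ => by
    apply Subtype.ext
    funext a
    simp [Finset.map_map]
  right_inv := fun ⟨f, hf⟩ => by
    apply Subtype.ext
    funext b
    simp [Finset.map_map]

lemma card_goodFun (α : Type*) [Fintype α] [DecidableEq α] :
    Nat.card (GoodFun α) = numGood (Fintype.card α) :=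
  Nat.card_congr (GoodFun.congr (Fintype.equivFinOfCardEq rfl))

section Fiber

variable {α : Type*} [Fintype α] [DecidableEq α] (x : α)

instance instFintypeGoodFun : Fintype (GoodFun α) := by
  unfold GoodFun; infer_instance

/-- Index of the decomposition: pairs (block of `x`, chosen subset). -/
def Idx : Type _ := {p : Finset α × Finset α // x ∈ p.1 ∧ p.2 ⊆ p.1 ∧ p.2.Nonempty}

instance : Fintype (Idx x) := by unfold Idx; infer_instance

instance : DecidableEq (Idx x) := by unfold Idx; exact fun a b => Subtype.instDecidableEq a b

def blockOf (f : GoodFun α) : Finset α := Finset.univ.filter (fun y => f.1 y = f.1 x)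

lemma mem_blockOf {f : GoodFun α} {y : α} : y ∈ blockOf x f ↔ f.1 y = f.1 x := by
  simp [blockOf]

def Phi (f : GoodFun α) : Idx x :=
  ⟨(blockOf x f, f.1 x), (mem_blockOf x).2 rfl,
    fun y hy => (mem_blockOf x).2 ((f.2 x).2 y hy), (f.2 x).1⟩

end Fiber

section Fiber2

variable {α : Type*} [Fintype α] [DecidableEq α] {x : α}

variable (B S : Finset α)

/-- Combine a block datum with a good function on the complement of `B`. -/
def combine (g : {a : α // a ∉ B} → Finset {a : α // a ∉ B}) (z : α) : Finset α :=
  if h : z ∈ B then S else (g ⟨z, h⟩).map (Function.Embedding.subtype _)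

variable {B S}

lemma combine_not_mem {g : {a : α // a ∉ B} → Finset {a : α // a ∉ B}} {z : α}
    (hz : z ∉ B) : combine B S g z = (g ⟨z, hz⟩).map (Function.Embedding.subtype _) := by
  simp [combine, hz]

lemma combine_mem {g : {a : α // a ∉ B} → Finset {a : α // a ∉ B}} {z : α}
    (hz : z ∈ B) : combine B S g z = S := by simp [combine, hz]

lemma phi_eq_iff {hxB : x ∈ B} {hSB : S ⊆ B} {hSne : S.Nonempty} {f : GoodFun α} :
    Phi x f = ⟨(B, S), hxB, hSB, hSne⟩ ↔ blockOf x f = B ∧ f.1 x = S := by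
  exact ⟨fun h => ⟨congrArg (fun p : Idx x => p.1.1) h, congrArg (fun p : Idx x => p.1.2) h⟩,
    fun ⟨h1, h2⟩ => Subtype.ext (Prod.ext h1 h2)⟩

lemma sub_notB {f : GoodFun α} (hB : blockOf x f = B) {z : α} (hz : z ∉ B) :
    ∀ y ∈ f.1 z, y ∉ B := by
  intro y hy hyB
  rw [← hB, mem_blockOf] at hyB
  have : f.1 y = f.1 z := (f.2 z).2 y hy
  rw [this] at hyB
  exact hz (hB ▸ (mem_blockOf x).2 hyB)

def fiberEquiv (hxB : x ∈ B) (hSB : S ⊆ B) (hSne : S.Nonempty) :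
    {f : GoodFun α // Phi x f = ⟨(B, S), hxB, hSB, hSne⟩} ≃ GoodFun {a : α // a ∉ B} where
  toFun := fun ⟨f, hf⟩ =>
    ⟨fun z => (f.1 z.1).subtype (fun a => a ∉ B), by
      obtain ⟨hB, hS⟩ := (phi_eq_iff (hxB := hxB) (hSB := hSB) (hSne := hSne)).1 hf
      intro z
      constructor
      · obtain ⟨y, hy⟩ := (f.2 z.1).1
        exact ⟨⟨y, sub_notB hB z.2 y hy⟩, by simpa [Finset.mem_subtype] using hy⟩
      · intro y hy
        rw [Finset.mem_subtype] at hy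
        have : f.1 y.1 = f.1 z.1 := (f.2 z.1).2 y.1 hy
        simp [this]⟩
  invFun := fun ⟨g, hg⟩ =>
    ⟨⟨combine B S g, by
      intro z
      by_cases hz : z ∈ B
      · rw [combine_mem hz]
        refine ⟨hSne, fun y hy => combine_mem (hSB hy)⟩
      · rw [combine_not_mem hz]
        constructor
        · exact ((hg ⟨z, hz⟩).1).map (f := Function.Embedding.subtype _)
        · intro y hy
          rw [Finset.mem_map] at hy
          obtain ⟨c, hc, rfl⟩ := hy
          have hcB : (Function.Embedding.subtype _ c : α) ∉ B := by
            rw [Function.Embedding.coe_subtype]; exact c.2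
          rw [combine_not_mem hcB]
          congr 1
          have : (⟨(Function.Embedding.subtype _ c : α), hcB⟩ : {a : α // a ∉ B}) = c :=
            Subtype.ext rfl
          rw [this]
          exact (hg ⟨z, hz⟩).2 c hc⟩, by
      refine (phi_eq_iff (hxB := hxB) (hSB := hSB) (hSne := hSne)).2 ?_
      refine ⟨?_, combine_mem hxB⟩
      ext y
      refine (mem_blockOf x).trans ?_
      simp only [combine_mem hxB]
      by_cases hy : y ∈ B
      · simp [combine_mem hy, hy]
      · simp only [combine_not_mem hy, hy, iff_false]
        intro heq
        obtain ⟨s, hs⟩ := hSne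
        have hsB : s ∈ B := hSB hs
        rw [← heq, Finset.mem_map] at hs
        obtain ⟨c, -, hc⟩ := hs
        exact c.2 (by rw [show (c : α) = s from hc]; exact hsB)⟩
  left_inv := fun ⟨f, hf⟩ => by
    obtain ⟨hB, hS⟩ := (phi_eq_iff (hxB := hxB) (hSB := hSB) (hSne := hSne)).1 hf
    apply Subtype.ext
    apply Subtype.ext
    funext z
    show combine B S (fun w => (f.1 w.1).subtype (fun a => a ∉ B)) z = f.1 z
    by_cases hz : z ∈ B
    · rw [combine_mem hz]
      rw [← hB, mem_blockOf] at hz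
      rw [hz, hS]
    · rw [combine_not_mem hz, Finset.subtype_map]
      exact Finset.filter_eq_self.2 (sub_notB hB hz)
  right_inv := fun ⟨g, hg⟩ => by
    apply Subtype.ext
    funext z
    have hz : z.1 ∉ B := z.2
    show Finset.subtype (fun a => a ∉ B) (combine B S g z.1) = g z
    have hzz : (⟨z.1, hz⟩ : {a : α // a ∉ B}) = z := Subtype.ext rfl
    ext a
    rw [Finset.mem_subtype]
    simp only [combine_not_mem hz, Finset.mem_map, Function.Embedding.coe_subtype]
    constructor
    · rintro ⟨c, hc, hca⟩
      have : c = a := Subtype.ext hca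
      rw [hzz] at hc
      rwa [← this]
    · intro ha
      rw [hzz]
      exact ⟨a, ha, rfl⟩

end Fiber2

section Count

variable {α : Type*} [Fintype α] [DecidableEq α]

def idxEquivSigma (x : α) :
    Idx (α := α) x ≃ Σ B : {B : Finset α // x ∈ B}, {S : Finset α // S ⊆ B.1 ∧ S.Nonempty} where
  toFun p := ⟨⟨p.1.1, p.2.1⟩, ⟨p.1.2, p.2.2.1, p.2.2.2⟩⟩
  invFun q := ⟨(q.1.1, q.2.1), q.1.2, q.2.2.1, q.2.2.2⟩
  left_inv p := rfl
  right_inv q := rfl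

lemma card_S_choices (B : Finset α) :
    Fintype.card {S : Finset α // S ⊆ B ∧ S.Nonempty} = 2 ^ B.card - 1 := by
  rw [Fintype.card_subtype]
  have h : Finset.univ.filter (fun S : Finset α => S ⊆ B ∧ S.Nonempty)
      = B.powerset.erase ∅ := by
    ext S
    simp [Finset.mem_powerset, Finset.nonempty_iff_ne_empty, and_comm]
  rw [h, Finset.card_erase_of_mem (by simp), Finset.card_powerset]

lemma card_fiber (x : α) (B S : Finset α) (hxB : x ∈ B) (hSB : S ⊆ B) (hSne : S.Nonempty) :
    Fintype.card {f : GoodFun α // Phi x f = @id (Idx x) ⟨(B, S), hxB, hSB, hSne⟩}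
      = numGood (Fintype.card α - B.card) := by
  rw [← Nat.card_eq_fintype_card]
  refine (Nat.card_congr (fiberEquiv hxB hSB hSne)).trans ?_
  rw [card_goodFun]
  congr 1
  rw [Fintype.card_subtype_compl, Fintype.card_coe]

lemma numGood_decomp (x : α) :
    numGood (Fintype.card α) =
      ∑ B ∈ Finset.univ.filter (fun B : Finset α => x ∈ B),
        (2 ^ B.card - 1) * numGood (Fintype.card α - B.card) := by
  have h1 : numGood (Fintype.card α) = Fintype.card (GoodFun α) := by
    rw [← card_goodFun α, Nat.card_eq_fintype_card]
  rw [h1, ← Fintype.card_congr (Equiv.sigmaFiberEquiv (Phi x)), Fintype.card_sigma]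
  have h2 : ∀ p : Idx (α := α) x,
      Fintype.card {f : GoodFun α // Phi x f = p}
        = numGood (Fintype.card α - p.1.1.card) := by
    rintro ⟨⟨B, S⟩, hxB, hSB, hSne⟩
    exact card_fiber x B S hxB hSB hSne
  rw [Finset.sum_congr rfl (fun p _ => h2 p)]
  rw [Fintype.sum_equiv (idxEquivSigma x)
    (fun p => numGood (Fintype.card α - p.1.1.card))
    (fun q => numGood (Fintype.card α - q.1.1.card)) (fun p => rfl)]
  rw [← Finset.univ_sigma_univ, Finset.sum_sigma]
  have h3 : ∀ B : {B : Finset α // x ∈ B},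
      (∑ S : {S : Finset α // S ⊆ B.1 ∧ S.Nonempty},
        numGood (Fintype.card α - B.1.card))
      = (2 ^ B.1.card - 1) * numGood (Fintype.card α - B.1.card) := by
    intro B
    rw [Finset.sum_const, Finset.card_univ, card_S_choices, smul_eq_mul]
  rw [Finset.sum_congr rfl (fun B _ => h3 B)]
  exact (Finset.sum_subtype (p := fun B => x ∈ B)
    (Finset.univ.filter (fun B : Finset α => x ∈ B)) (fun B => by simp)
    (fun B : Finset α => (2 ^ B.card - 1) * numGood (Fintype.card α - B.card))).symm

end Count

lemma numGood_zero : numGood 0 = 1 := by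
  haveI : Unique (GoodFun (Fin 0)) :=
    { default := ⟨fun z => z.elim0, fun z => z.elim0⟩
      uniq := fun f => by
        apply Subtype.ext; funext z; exact z.elim0 }
  exact Nat.card_unique

lemma numGood_succ (m : ℕ) :
    numGood (m + 1) = ∑ j ∈ Finset.range (m + 1),
      m.choose j * ((2 ^ (j + 1) - 1) * numGood (m - j)) := by
  have h := numGood_decomp (α := Fin (m + 1)) (0 : Fin (m + 1))
  rw [Fintype.card_fin] at h
  rw [h]
  have hre : ∑ B ∈ Finset.univ.filter (fun B : Finset (Fin (m + 1)) => (0 : Fin (m+1)) ∈ B),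
        (2 ^ B.card - 1) * numGood (m + 1 - B.card)
      = ∑ A ∈ (Finset.univ.erase (0 : Fin (m+1))).powerset,
        (2 ^ (A.card + 1) - 1) * numGood (m - A.card) := by
    refine Finset.sum_bij' (fun (B : Finset (Fin (m+1))) _ => B.erase 0)
      (fun (A : Finset (Fin (m+1))) _ => insert 0 A) ?_ ?_ ?_ ?_ ?_
    · intro B hB
      rw [Finset.mem_powerset]
      exact Finset.erase_subset_erase _ (Finset.subset_univ B)
    · intro A hA
      simp only [Finset.mem_filter, Finset.mem_univ, true_and]
      exact Finset.mem_insert_self _ _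
    · intro B hB
      simp only [Finset.mem_filter, Finset.mem_univ, true_and] at hB
      exact Finset.insert_erase hB
    · intro A hA
      rw [Finset.mem_powerset] at hA
      have h0 : (0 : Fin (m+1)) ∉ A := fun h => (Finset.mem_erase.1 (hA h)).1 rfl
      exact Finset.erase_insert h0
    · intro B hB
      simp only [Finset.mem_filter, Finset.mem_univ, true_and] at hB
      have hc : B.card = (B.erase 0).card + 1 := by
        rw [Finset.card_erase_of_mem hB]
        have : 1 ≤ B.card := Finset.card_pos.2 ⟨0, hB⟩
        omega
      rw [hc]
      show (2 ^ ((B.erase 0).card + 1) - 1) * numGood (m + 1 - ((B.erase 0).card + 1))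
        = (2 ^ ((B.erase 0).card + 1) - 1) * numGood (m - (B.erase 0).card)
      congr 2
      omega
  rw [hre]
  have := Finset.sum_powerset_apply_card
    (fun j => (2 ^ (j + 1) - 1) * numGood (m - j)) (x := Finset.univ.erase (0 : Fin (m+1)))
  have hcard : (Finset.univ.erase (0 : Fin (m+1))).card = m := by
    rw [Finset.card_erase_of_mem (Finset.mem_univ _), Finset.card_univ, Fintype.card_fin]
    omega
  rw [hcard] at this
  rw [this]
  exact Finset.sum_congr rfl (fun j _ => smul_eq_mul _ _)

section Series
open Finset

noncomputable def fser : PowerSeries ℚ := rescale (2 : ℚ) (exp ℚ) - exp ℚ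

noncomputable def cc (i : ℕ) : ℚ := (2 ^ (i + 1) - 1) / i.factorial

lemma coeff_fser (k : ℕ) : coeff k fser = (2 ^ k - 1) / k.factorial := by
  simp only [fser, map_sub, coeff_rescale, coeff_exp]
  have h : algebraMap ℚ ℚ ((1 : ℚ) / k.factorial) = 1 / k.factorial := rfl
  rw [h]
  ring

lemma constantCoeff_fser : constantCoeff fser = 0 := by
  rw [← coeff_zero_eq_constantCoeff_apply, coeff_fser]
  norm_num

lemma coeff_pow_fser {n k : ℕ} (h : n < k) : coeff n (fser ^ k) = 0 := by
  have hX : (X : ℚ⟦X⟧) ∣ fser := X_dvd_iff.2 constantCoeff_fser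
  exact (X_pow_dvd_iff.1 (pow_dvd_pow_of_dvd hX k)) n h

noncomputable def vv (n : ℕ) : ℚ := coeff n (substInto fser (exp ℚ))

lemma vv_eq (n : ℕ) :
    vv n = ∑ k ∈ range (n + 1), (1 / k.factorial : ℚ) * coeff n (fser ^ k) := by
  simp only [vv, substInto, coeff_mk, map_sum, coeff_C_mul, coeff_exp]
  rfl

lemma vv_eq' {n N : ℕ} (h : n ≤ N) :
    vv n = ∑ k ∈ range (N + 1), (1 / k.factorial : ℚ) * coeff n (fser ^ k) := by
  rw [vv_eq]
  refine Finset.sum_subset (by intro k hk; simp only [mem_range] at *; omega) ?_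
  intro k hk hk'
  simp only [mem_range] at hk hk'
  rw [coeff_pow_fser (by omega), mul_zero]

lemma vv_zero : vv 0 = 1 := by
  rw [vv_eq]
  simp

lemma coeff_dfser (j : ℕ) : coeff j (d⁄dX ℚ fser) = cc j := by
  rw [coeff_derivative, coeff_fser, cc]
  rw [Nat.factorial_succ]
  push_cast
  have h1 : ((j : ℚ) + 1) ≠ 0 := by positivity
  have h2 : ((j.factorial : ℚ)) ≠ 0 := Nat.cast_ne_zero.2 j.factorial_ne_zero
  field_simp

lemma vv_rec (n : ℕ) :
    (n + 1 : ℚ) * vv (n + 1) = ∑ k ∈ range (n + 1), vv k * cc (n - k) := by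
  rw [vv_eq (n + 1), Finset.mul_sum]
  have step1 : ∀ k ∈ range (n + 2),
      (n + 1 : ℚ) * ((1 / k.factorial : ℚ) * coeff (n + 1) (fser ^ k))
        = (1 / k.factorial : ℚ) * coeff n (d⁄dX ℚ (fser ^ k)) := by
    intro k _
    rw [coeff_derivative]
    ring
  rw [Finset.sum_congr rfl step1, Finset.sum_range_succ']
  have step2 : (1 / (Nat.factorial 0) : ℚ) * coeff n (d⁄dX ℚ (fser ^ 0)) = 0 := by
    simp
  rw [step2, add_zero]
  have step3 : ∀ k, d⁄dX ℚ (fser ^ (k + 1)) = (k + 1) • fser ^ k • d⁄dX ℚ fser := by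
    intro k
    have := Derivation.leibniz_pow (D := d⁄dX ℚ) (a := fser) (k + 1)
    simpa using this
  have step4 : ∀ k ∈ range (n + 1),
      (1 / ((k+1).factorial) : ℚ) * coeff n (d⁄dX ℚ (fser ^ (k + 1)))
        = (1 / k.factorial : ℚ) * coeff n (fser ^ k * d⁄dX ℚ fser) := by
    intro k _
    rw [step3 k]
    have : coeff n ((k + 1) • fser ^ k • d⁄dX ℚ fser)
        = (k + 1 : ℚ) * coeff n (fser ^ k * d⁄dX ℚ fser) := by
      rw [smul_eq_mul (a := fser ^ k), map_nsmul, nsmul_eq_mul]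
      push_cast
      ring
    rw [this, Nat.factorial_succ]
    push_cast
    have h1 : ((k : ℚ) + 1) ≠ 0 := by positivity
    have h2 : ((k.factorial : ℚ)) ≠ 0 := Nat.cast_ne_zero.2 k.factorial_ne_zero
    field_simp
  rw [Finset.sum_congr rfl step4]
  -- expand coeff of product and swap sums
  have step5 : ∀ k ∈ range (n + 1),
      (1 / k.factorial : ℚ) * coeff n (fser ^ k * d⁄dX ℚ fser)
        = ∑ p ∈ Finset.HasAntidiagonal.antidiagonal n,
            ((1 / k.factorial : ℚ) * coeff p.1 (fser ^ k)) * cc p.2 := by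
    intro k _
    rw [coeff_mul, Finset.mul_sum]
    refine Finset.sum_congr rfl fun p _ => ?_
    rw [coeff_dfser]
    ring
  rw [Finset.sum_congr rfl step5, Finset.sum_comm]
  have step6 : ∀ p ∈ Finset.HasAntidiagonal.antidiagonal n,
      (∑ k ∈ range (n + 1), ((1 / k.factorial : ℚ) * coeff p.1 (fser ^ k)) * cc p.2)
        = vv p.1 * cc p.2 := by
    intro p hp
    rw [Finset.HasAntidiagonal.mem_antidiagonal] at hp
    rw [← Finset.sum_mul]
    congr 1
    exact (vv_eq' (by omega)).symm
  rw [Finset.sum_congr rfl step6]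
  rw [Finset.Nat.sum_antidiagonal_eq_sum_range_succ_mk]

end Series

lemma numAbsorbing_eq (m : ℕ) : numAbsorbing m = numGood m := numAbsorbing_eq_numGood m

noncomputable def uu (n : ℕ) : ℚ := (numGood n : ℚ) / n.factorial

lemma uu_zero : uu 0 = 1 := by simp [uu, numGood_zero]

lemma uu_rec (n : ℕ) :
    (n + 1 : ℚ) * uu (n + 1) = ∑ k ∈ Finset.range (n + 1), uu k * cc (n - k) := by
  have h2 : (n.factorial : ℚ) ≠ 0 := Nat.cast_ne_zero.2 n.factorial_ne_zero
  have hL : (n + 1 : ℚ) * uu (n + 1) = (numGood (n+1) : ℚ) / n.factorial := by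
    rw [uu, Nat.factorial_succ]
    have h1 : ((n:ℚ)+1) ≠ 0 := by positivity
    push_cast
    field_simp
  rw [hL, numGood_succ n, Nat.cast_sum, Finset.sum_div]
  have key : ∀ j ∈ Finset.range (n+1),
      ((n.choose j * ((2 ^ (j + 1) - 1) * numGood (n - j)) : ℕ) : ℚ) / n.factorial
        = cc j * uu (n - j) := by
    intro j hj
    rw [Finset.mem_range] at hj
    have hjn : j ≤ n := by omega
    rw [Nat.cast_mul, Nat.cast_mul, Nat.cast_choose ℚ hjn,
      Nat.cast_sub (Nat.one_le_two_pow), cc, uu]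
    have hj2 : (j.factorial : ℚ) ≠ 0 := Nat.cast_ne_zero.2 j.factorial_ne_zero
    have hj3 : ((n-j).factorial : ℚ) ≠ 0 := Nat.cast_ne_zero.2 (n-j).factorial_ne_zero
    push_cast
    field_simp
  rw [Finset.sum_congr rfl key]
  rw [← Finset.sum_range_reflect (fun k => uu k * cc (n - k)) (n+1)]
  refine Finset.sum_congr rfl fun j hj => ?_
  rw [Finset.mem_range] at hj
  have e1 : n + 1 - 1 - j = n - j := by omega
  rw [e1]
  have e2 : n - (n - j) = j := by omega
  rw [e2]
  ring

lemma uu_eq_vv : ∀ n, uu n = vv n := by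
  intro n
  induction n using Nat.strong_induction_on with
  | _ n ih =>
    match n with
    | 0 => rw [uu_zero, vv_zero]
    | Nat.succ m =>
      have h3 : ∑ k ∈ Finset.range (m+1), uu k * cc (m-k)
          = ∑ k ∈ Finset.range (m+1), vv k * cc (m-k) :=
        Finset.sum_congr rfl fun k hk => by
          rw [ih k (by rw [Finset.mem_range] at hk; omega)]
      have h4 : (m + 1 : ℚ) ≠ 0 := by positivity
      exact mul_left_cancel₀ h4 ((uu_rec m).trans (h3.trans (vv_rec m).symm))

/-- Exponential generating function: `Σ a(n) Xⁿ/n! = exp(e^X (e^X - 1))`,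
i.e. the substitution of `f = exp(2X) - exp(X)` (a series with zero constant
term) into the exponential series. -/
theorem egf_absorbing :
    (PowerSeries.mk fun n => (numAbsorbing n : ℚ) / n.factorial) =
      substInto (rescale (2 : ℚ) (exp ℚ) - exp ℚ) (exp ℚ) := by
  ext n
  rw [coeff_mk]
  have h1 : (numAbsorbing n : ℚ) / n.factorial = uu n := by
    rw [uu, numAbsorbing_eq]
  rw [h1, uu_eq_vv n]
  rfl
end

section
/- Isomorphism classification of absorbing states: let n ≥ 3, and let M and M' be absorbing states on Fin n with characterization data (P, C) and (P', C') respectively (partition into factions and core set satisfying the characterization condition). Then there exists a permutation σ of Fin n with M' i j = M (σ⁻¹ i) (σ⁻¹ j) for all i, j if and only if the multiset of pairs (|F|, |F ∩ C|), taken over the blocks F of P, equals the multiset of pairs (|F'|, |F' ∩ C'|) taken over the blocks F' of P'. -/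
section Aux

open Finset

/-- From equality of multiset images, extract a bijection. -/
lemma exists_bij_of_map_eq {α β γ : Type*} [DecidableEq α] [DecidableEq β] [Nonempty β]
    (f : α → γ) (g : β → γ) (s : Finset α) :
    ∀ (t : Finset β), s.val.map f = t.val.map g →
    ∃ e : α → β, (∀ a ∈ s, ∀ a' ∈ s, e a = e a' → a = a') ∧ (∀ a ∈ s, e a ∈ t) ∧
      (∀ b ∈ t, ∃ a ∈ s, e a = b) ∧ (∀ a ∈ s, g (e a) = f a) := by
  induction s using Finset.induction_on with
  | empty =>
    intro t h
    have ht : t = ∅ := by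
      have := congrArg Multiset.card h
      simpa [Finset.card_eq_zero] using this.symm
    subst ht
    exact ⟨fun _ => Classical.arbitrary β, by simp, by simp, by simp, by simp⟩
  | @insert a s' ha IH =>
    intro t h
    rw [Finset.insert_val_of_notMem ha, Multiset.map_cons] at h
    have hma : f a ∈ t.val.map g := by rw [← h]; exact Multiset.mem_cons_self _ _
    obtain ⟨b, hbv, hgb⟩ := Multiset.mem_map.mp hma
    have hbt : b ∈ t := hbv
    have h1 : t.val = b ::ₘ (t.erase b).val := by
      rw [Finset.erase_val]
      exact (Multiset.cons_erase hbv).symm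
    have ht' : s'.val.map f = (t.erase b).val.map g := by
      rw [h1, Multiset.map_cons, hgb] at h
      exact (Multiset.cons_inj_right _).mp h
    obtain ⟨e', h1', h2', h3', h4'⟩ := IH (t.erase b) ht'
    refine ⟨fun x => if x = a then b else e' x, ?_, ?_, ?_, ?_⟩
    · intro x hx y hy hxy
      replace hxy : (if x = a then b else e' x) = (if y = a then b else e' y) := hxy
      by_cases hxa : x = a <;> by_cases hya : y = a
      · rw [hxa, hya]
      · exfalso
        rw [if_pos hxa, if_neg hya] at hxy
        have hy' : y ∈ s' := by
          rcases Finset.mem_insert.mp hy with h | h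
          · exact absurd h hya
          · exact h
        have := h2' y hy'
        rw [← hxy] at this
        exact Finset.notMem_erase _ _ this
      · exfalso
        rw [if_neg hxa, if_pos hya] at hxy
        have hx' : x ∈ s' := by
          rcases Finset.mem_insert.mp hx with h | h
          · exact absurd h hxa
          · exact h
        have := h2' x hx'
        rw [hxy] at this
        exact Finset.notMem_erase _ _ this
      · rw [if_neg hxa, if_neg hya] at hxy
        have hx' : x ∈ s' := by
          rcases Finset.mem_insert.mp hx with h | h
          · exact absurd h hxa
          · exact h
        have hy' : y ∈ s' := by
          rcases Finset.mem_insert.mp hy with h | h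
          · exact absurd h hya
          · exact h
        exact h1' x hx' y hy' hxy
    · intro x hx
      show (if x = a then b else e' x) ∈ t
      by_cases hxa : x = a
      · rw [if_pos hxa]; exact hbt
      · rw [if_neg hxa]
        have hx' : x ∈ s' := by
          rcases Finset.mem_insert.mp hx with h | h
          · exact absurd h hxa
          · exact h
        exact Finset.mem_of_mem_erase (h2' x hx')
    · intro b' hb'
      by_cases hbb : b' = b
      · exact ⟨a, Finset.mem_insert_self _ _, by show (if a = a then b else e' a) = b'; rw [if_pos rfl, hbb]⟩
      · obtain ⟨x, hx, hex⟩ := h3' b' (Finset.mem_erase.mpr ⟨hbb, hb'⟩)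
        have hxa : x ≠ a := fun hc => ha (hc ▸ hx)
        exact ⟨x, Finset.mem_insert_of_mem hx,
          by show (if x = a then b else e' x) = b'; rw [if_neg hxa]; exact hex⟩
    · intro x hx
      show g (if x = a then b else e' x) = f x
      by_cases hxa : x = a
      · rw [if_pos hxa, hgb, hxa]
      · rw [if_neg hxa]
        have hx' : x ∈ s' := by
          rcases Finset.mem_insert.mp hx with h | h
          · exact absurd h hxa
          · exact h
        exact h4' x hx'

/-- From equality of cardinalities, extract a bijection. -/
lemma exists_bij_of_card_eq {α β : Type*} [DecidableEq α] [DecidableEq β] [Nonempty β]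
    (s : Finset α) (t : Finset β) (h : s.card = t.card) :
    ∃ e : α → β, (∀ a ∈ s, ∀ a' ∈ s, e a = e a' → a = a') ∧ (∀ a ∈ s, e a ∈ t) ∧
      (∀ b ∈ t, ∃ a ∈ s, e a = b) := by
  obtain ⟨e, h1, h2, h3, _⟩ := exists_bij_of_map_eq (fun _ : α => (0 : ℕ)) (fun _ : β => (0 : ℕ))
    s t (by simp [Multiset.map_const', h])
  exact ⟨e, h1, h2, h3⟩

/-- Same-block relation is determined by the matrix. -/
lemma sameBlock_iff {n : ℕ} (M : Fin n → Fin n → Bool)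
    (P : Finpartition (Finset.univ : Finset (Fin n))) (C : Finset (Fin n))
    (hc : ∀ F ∈ P.parts, (F ∩ C).Nonempty)
    (hch : ∀ i j : Fin n, i ≠ j →
      (M i j = true ↔ (∃ F ∈ P.parts, i ∈ F ∧ j ∈ F) ∧ j ∈ C))
    (x y : Fin n) (hxy : x ≠ y) :
    (∃ F ∈ P.parts, x ∈ F ∧ y ∈ F) ↔
      (M x y = true ∨ M y x = true ∨
        ∃ c, c ≠ x ∧ c ≠ y ∧ M x c = true ∧ M y c = true) := by
  constructor
  · rintro ⟨F, hF, hx, hy⟩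
    by_cases hyC : y ∈ C
    · exact Or.inl ((hch x y hxy).mpr ⟨⟨F, hF, hx, hy⟩, hyC⟩)
    by_cases hxC : x ∈ C
    · exact Or.inr (Or.inl ((hch y x hxy.symm).mpr ⟨⟨F, hF, hy, hx⟩, hxC⟩))
    obtain ⟨c, hc'⟩ := hc F hF
    rw [Finset.mem_inter] at hc'
    have hcx : c ≠ x := fun hcc => hxC (hcc ▸ hc'.2)
    have hcy : c ≠ y := fun hcc => hyC (hcc ▸ hc'.2)
    refine Or.inr (Or.inr ⟨c, hcx, hcy, ?_, ?_⟩)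
    · exact (hch x c (Ne.symm hcx)).mpr ⟨⟨F, hF, hx, hc'.1⟩, hc'.2⟩
    · exact (hch y c (Ne.symm hcy)).mpr ⟨⟨F, hF, hy, hc'.1⟩, hc'.2⟩
  · rintro (h | h | ⟨c, hcx, hcy, h1, h2⟩)
    · exact ((hch x y hxy).mp h).1
    · obtain ⟨F, hF, hy, hx⟩ := ((hch y x hxy.symm).mp h).1
      exact ⟨F, hF, hx, hy⟩
    · obtain ⟨F, hF, hx, hcF⟩ := ((hch x c (Ne.symm hcx)).mp h1).1
      obtain ⟨G, hG, hy, hcG⟩ := ((hch y c (Ne.symm hcy)).mp h2).1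
      have : F = G := P.eq_of_mem_parts hF hG hcF hcG
      exact ⟨F, hF, hx, this ▸ hy⟩

/-- The partition is determined by the matrix. -/
lemma parts_subset_of_char {n : ℕ} (M : Fin n → Fin n → Bool)
    (P Q : Finpartition (Finset.univ : Finset (Fin n))) (C D : Finset (Fin n))
    (hcP : ∀ F ∈ P.parts, (F ∩ C).Nonempty)
    (hchP : ∀ i j : Fin n, i ≠ j →
      (M i j = true ↔ (∃ F ∈ P.parts, i ∈ F ∧ j ∈ F) ∧ j ∈ C))
    (hcQ : ∀ F ∈ Q.parts, (F ∩ D).Nonempty)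
    (hchQ : ∀ i j : Fin n, i ≠ j →
      (M i j = true ↔ (∃ F ∈ Q.parts, i ∈ F ∧ j ∈ F) ∧ j ∈ D)) :
    P.parts ⊆ Q.parts := by
  intro F hF
  obtain ⟨x, hx⟩ := P.nonempty_of_mem_parts hF
  obtain ⟨G, hG, hxG⟩ := Q.exists_mem (Finset.mem_univ x)
  have hFG : F = G := by
    ext y
    by_cases hxy : y = x
    · subst hxy; simp [hx, hxG]
    constructor
    · intro hy
      have hpred := (sameBlock_iff M P C hcP hchP x y (Ne.symm hxy)).mp ⟨F, hF, hx, hy⟩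
      obtain ⟨G', hG', hxG', hyG'⟩ := (sameBlock_iff M Q D hcQ hchQ x y (Ne.symm hxy)).mpr hpred
      have : G' = G := Q.eq_of_mem_parts hG' hG hxG' hxG
      exact this ▸ hyG'
    · intro hy
      have hpred := (sameBlock_iff M Q D hcQ hchQ x y (Ne.symm hxy)).mp ⟨G, hG, hxG, hy⟩
      obtain ⟨F', hF', hxF', hyF'⟩ := (sameBlock_iff M P C hcP hchP x y (Ne.symm hxy)).mpr hpred
      have : F' = F := P.eq_of_mem_parts hF' hF hxF' hx
      exact this ▸ hyF'
  exact hFG ▸ hG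

lemma inter_core_subset_of_char {n : ℕ} (M : Fin n → Fin n → Bool)
    (P Q : Finpartition (Finset.univ : Finset (Fin n))) (C D : Finset (Fin n))
    (hchP : ∀ i j : Fin n, i ≠ j →
      (M i j = true ↔ (∃ F ∈ P.parts, i ∈ F ∧ j ∈ F) ∧ j ∈ C))
    (hchQ : ∀ i j : Fin n, i ≠ j →
      (M i j = true ↔ (∃ F ∈ Q.parts, i ∈ F ∧ j ∈ F) ∧ j ∈ D))
    (F : Finset (Fin n)) (hFP : F ∈ P.parts) (h2 : 1 < F.card) :
    F ∩ C ⊆ F ∩ D := by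
  intro j hj
  rw [Finset.mem_inter] at hj ⊢
  obtain ⟨i, hi, hij⟩ := Finset.exists_mem_ne h2 j
  have hM : M i j = true := (hchP i j hij).mpr ⟨⟨F, hFP, hi, hj.1⟩, hj.2⟩
  exact ⟨hj.1, ((hchQ i j hij).mp hM).2⟩

/-- Two characterization data for the same matrix yield the same type multiset. -/
lemma multiset_unique_of_char {n : ℕ} (M : Fin n → Fin n → Bool)
    (P Q : Finpartition (Finset.univ : Finset (Fin n))) (C D : Finset (Fin n))
    (hcP : ∀ F ∈ P.parts, (F ∩ C).Nonempty)
    (hchP : ∀ i j : Fin n, i ≠ j →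
      (M i j = true ↔ (∃ F ∈ P.parts, i ∈ F ∧ j ∈ F) ∧ j ∈ C))
    (hcQ : ∀ F ∈ Q.parts, (F ∩ D).Nonempty)
    (hchQ : ∀ i j : Fin n, i ≠ j →
      (M i j = true ↔ (∃ F ∈ Q.parts, i ∈ F ∧ j ∈ F) ∧ j ∈ D)) :
    P.parts.val.map (fun F => (F.card, (F ∩ C).card)) =
      Q.parts.val.map (fun F => (F.card, (F ∩ D).card)) := by
  have hPQ : P.parts = Q.parts :=
    Finset.Subset.antisymm (parts_subset_of_char M P Q C D hcP hchP hcQ hchQ)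
      (parts_subset_of_char M Q P D C hcQ hchQ hcP hchP)
  rw [hPQ]
  refine Multiset.map_congr rfl ?_
  intro F hFv
  have hFQ : F ∈ Q.parts := hFv
  have hFP : F ∈ P.parts := hPQ ▸ hFQ
  suffices h : (F ∩ C).card = (F ∩ D).card by rw [h]
  have hpos : 0 < F.card := Finset.card_pos.mpr (Q.nonempty_of_mem_parts hFQ)
  rcases eq_or_lt_of_le (show 1 ≤ F.card from hpos) with h1 | h2
  · have e1 : (F ∩ C).card = 1 :=
      le_antisymm ((Finset.card_le_card Finset.inter_subset_left).trans h1.ge)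
        (Finset.card_pos.mpr (hcP F hFP))
    have e2 : (F ∩ D).card = 1 :=
      le_antisymm ((Finset.card_le_card Finset.inter_subset_left).trans h1.ge)
        (Finset.card_pos.mpr (hcQ F hFQ))
    rw [e1, e2]
  · have := Finset.Subset.antisymm
      (inter_core_subset_of_char M P Q C D hchP hchQ F hFP h2)
      (inter_core_subset_of_char M Q P D C hchQ hchP F hFQ h2)
    rw [this]

end Aux

/-- Isomorphism classification: two absorbing states are related by a
relabeling permutation iff their multisets of (faction size, core size)
pairs coincide. -/
theorem iso_iff_same_type_multiset {n : ℕ} (hn : 3 ≤ n)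
    (M M' : Fin n → Fin n → Bool)
    (hdiag : ∀ i, M i i = false) (hdiag' : ∀ i, M' i i = false)
    (habs : Absorbing M) (habs' : Absorbing M')
    (P P' : Finpartition (Finset.univ : Finset (Fin n)))
    (C C' : Finset (Fin n))
    (hcore : ∀ F ∈ P.parts, (F ∩ C).Nonempty)
    (hchar : ∀ i j : Fin n, i ≠ j →
      (M i j = true ↔ (∃ F ∈ P.parts, i ∈ F ∧ j ∈ F) ∧ j ∈ C))
    (hcore' : ∀ F ∈ P'.parts, (F ∩ C').Nonempty)
    (hchar' : ∀ i j : Fin n, i ≠ j →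
      (M' i j = true ↔ (∃ F ∈ P'.parts, i ∈ F ∧ j ∈ F) ∧ j ∈ C')) :
    (∃ σ : Equiv.Perm (Fin n), ∀ i j : Fin n, M' i j = M (σ⁻¹ i) (σ⁻¹ j)) ↔
      P.parts.val.map (fun F => (F.card, (F ∩ C).card)) =
        P'.parts.val.map (fun F => (F.card, (F ∩ C').card)) := by
  constructor
  · -- forward direction
    rintro ⟨σ, hσ⟩
    -- the image partition
    set emb : Fin n ↪ Fin n := (σ : Equiv.Perm (Fin n)).toEmbedding with hemb
    have hmem : ∀ (F : Finset (Fin n)) (x : Fin n), x ∈ F.map emb ↔ σ⁻¹ x ∈ F := by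
      intro F x
      simp only [Finset.mem_map, hemb, Equiv.coe_toEmbedding]
      constructor
      · rintro ⟨a, ha, rfl⟩; simpa using ha
      · intro h; exact ⟨σ⁻¹ x, h, by simp⟩
    let eiso : Finset (Fin n) ≃o Finset (Fin n) :=
      { toEquiv := σ.finsetCongr
        map_rel_iff' := by
          intro s t
          simp only [Equiv.finsetCongr_apply]
          exact Finset.map_subset_map }
    have huniv : eiso Finset.univ = Finset.univ := by
      simp only [eiso, Equiv.finsetCongr_apply, RelIso.coe_fn_mk]
      exact Finset.map_univ_equiv _
    let Q : Finpartition (Finset.univ : Finset (Fin n)) := (P.map eiso).copy huniv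
    have hQparts : Q.parts = P.parts.map
        ⟨fun F => F.map emb, fun F G h => by
          apply Finset.map_injective emb h⟩ := by
      show (P.map eiso).parts = _
      rw [Finpartition.parts_map]
      rfl
    have hQmem : ∀ G : Finset (Fin n),
        G ∈ Q.parts ↔ ∃ F ∈ P.parts, F.map emb = G := by
      intro G; rw [hQparts]; simp [Finset.mem_map]; rfl
    have hne : ∀ i j : Fin n, i ≠ j → (σ⁻¹ i : Fin n) ≠ σ⁻¹ j := by
      intro i j hij hc
      exact hij (by simpa using congrArg σ hc)
    -- Q with core C.map emb characterizes M'
    have hcQ : ∀ F ∈ Q.parts, (F ∩ C.map emb).Nonempty := by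
      intro G hG
      obtain ⟨F, hF, rfl⟩ := (hQmem G).mp hG
      rw [← Finset.map_inter]
      exact (hcore F hF).map
    have hchQ : ∀ i j : Fin n, i ≠ j →
        (M' i j = true ↔ (∃ F ∈ Q.parts, i ∈ F ∧ j ∈ F) ∧ j ∈ C.map emb) := by
      intro i j hij
      rw [hσ i j, hchar _ _ (hne i j hij)]
      constructor
      · rintro ⟨⟨F, hF, hi, hj⟩, hjC⟩
        refine ⟨⟨F.map emb, (hQmem _).mpr ⟨F, hF, rfl⟩, ?_, ?_⟩, ?_⟩
        · exact (hmem F i).mpr hi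
        · exact (hmem F j).mpr hj
        · exact (hmem C j).mpr hjC
      · rintro ⟨⟨G, hG, hi, hj⟩, hjC⟩
        obtain ⟨F, hF, rfl⟩ := (hQmem G).mp hG
        exact ⟨⟨F, hF, (hmem F i).mp hi, (hmem F j).mp hj⟩, (hmem C j).mp hjC⟩
    have huq := multiset_unique_of_char M' Q P' (C.map emb) C' hcQ hchQ hcore' hchar'
    rw [← huq, hQparts, Finset.map_val, Multiset.map_map]
    refine Multiset.map_congr rfl ?_
    intro F _
    simp only [Function.comp_apply, Function.Embedding.coeFn_mk]
    show (F.card, (F ∩ C).card) = ((F.map emb).card, (F.map emb ∩ C.map emb).card)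
    rw [← Finset.map_inter, Finset.card_map, Finset.card_map]
  · -- backward direction
    intro h
    haveI : Nonempty (Fin n) := ⟨⟨0, by omega⟩⟩
    obtain ⟨e, einj, emem, esurj, epres⟩ := exists_bij_of_map_eq
      (fun F => (F.card, (F ∩ C).card)) (fun F => (F.card, (F ∩ C').card))
      P.parts P'.parts h
    have ecard : ∀ F ∈ P.parts, (e F).card = F.card := by
      intro F hF
      have := epres F hF
      exact (Prod.ext_iff.mp this).1
    have ecore : ∀ F ∈ P.parts, (e F ∩ C').card = (F ∩ C).card := by
      intro F hF
      have := epres F hF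
      exact (Prod.ext_iff.mp this).2
    -- block bijections
    have key : ∀ F, ∃ φ : Fin n → Fin n, F ∈ P.parts →
        ((∀ x ∈ F, ∀ y ∈ F, φ x = φ y → x = y) ∧ (∀ x ∈ F, φ x ∈ e F) ∧
         (∀ x ∈ F, (φ x ∈ C' ↔ x ∈ C)) ∧ (∀ y ∈ e F, ∃ x ∈ F, φ x = y)) := by
      intro F
      by_cases hF : F ∈ P.parts
      swap
      · exact ⟨id, fun h => absurd h hF⟩
      have hcc : (F ∩ C).card = (e F ∩ C').card := (ecore F hF).symm
      have hnn : (F \ C).card = (e F \ C').card := by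
        have h1 : F \ C = F \ (F ∩ C) := by
          ext x; simp only [Finset.mem_sdiff, Finset.mem_inter]; tauto
        have h2 : e F \ C' = e F \ (e F ∩ C') := by
          ext x; simp only [Finset.mem_sdiff, Finset.mem_inter]; tauto
        rw [h1, h2, Finset.card_sdiff_of_subset Finset.inter_subset_left,
          Finset.card_sdiff_of_subset Finset.inter_subset_left, ecard F hF, ecore F hF]
      obtain ⟨u, u1, u2, u3⟩ := exists_bij_of_card_eq (F ∩ C) (e F ∩ C') hcc
      obtain ⟨v, v1, v2, v3⟩ := exists_bij_of_card_eq (F \ C) (e F \ C') hnn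
      refine ⟨fun x => if x ∈ C then u x else v x, fun _ => ⟨?_, ?_, ?_, ?_⟩⟩
      · intro x hx y hy hxy
        replace hxy : (if x ∈ C then u x else v x) = (if y ∈ C then u y else v y) := hxy
        by_cases hxC : x ∈ C <;> by_cases hyC : y ∈ C
        · rw [if_pos hxC, if_pos hyC] at hxy
          exact u1 x (Finset.mem_inter.mpr ⟨hx, hxC⟩) y (Finset.mem_inter.mpr ⟨hy, hyC⟩) hxy
        · exfalso
          rw [if_pos hxC, if_neg hyC] at hxy
          have h1 := u2 x (Finset.mem_inter.mpr ⟨hx, hxC⟩)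
          have h2 := v2 y (Finset.mem_sdiff.mpr ⟨hy, hyC⟩)
          rw [hxy] at h1
          exact (Finset.mem_sdiff.mp h2).2 (Finset.mem_inter.mp h1).2
        · exfalso
          rw [if_neg hxC, if_pos hyC] at hxy
          have h1 := u2 y (Finset.mem_inter.mpr ⟨hy, hyC⟩)
          have h2 := v2 x (Finset.mem_sdiff.mpr ⟨hx, hxC⟩)
          rw [← hxy] at h1
          exact (Finset.mem_sdiff.mp h2).2 (Finset.mem_inter.mp h1).2
        · rw [if_neg hxC, if_neg hyC] at hxy
          exact v1 x (Finset.mem_sdiff.mpr ⟨hx, hxC⟩) y (Finset.mem_sdiff.mpr ⟨hy, hyC⟩) hxy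
      · intro x hx
        show (if x ∈ C then u x else v x) ∈ e F
        by_cases hxC : x ∈ C
        · rw [if_pos hxC]
          exact (Finset.mem_inter.mp (u2 x (Finset.mem_inter.mpr ⟨hx, hxC⟩))).1
        · rw [if_neg hxC]
          exact (Finset.mem_sdiff.mp (v2 x (Finset.mem_sdiff.mpr ⟨hx, hxC⟩))).1
      · intro x hx
        show (if x ∈ C then u x else v x) ∈ C' ↔ x ∈ C
        by_cases hxC : x ∈ C
        · rw [if_pos hxC]
          simp only [hxC, iff_true]
          exact (Finset.mem_inter.mp (u2 x (Finset.mem_inter.mpr ⟨hx, hxC⟩))).2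
        · rw [if_neg hxC]
          simp only [hxC, iff_false]
          exact (Finset.mem_sdiff.mp (v2 x (Finset.mem_sdiff.mpr ⟨hx, hxC⟩))).2
      · intro y hy
        by_cases hyC : y ∈ C'
        · obtain ⟨x, hx, hux⟩ := u3 y (Finset.mem_inter.mpr ⟨hy, hyC⟩)
          rw [Finset.mem_inter] at hx
          exact ⟨x, hx.1, by show (if x ∈ C then u x else v x) = y; rw [if_pos hx.2]; exact hux⟩
        · obtain ⟨x, hx, hvx⟩ := v3 y (Finset.mem_sdiff.mpr ⟨hy, hyC⟩)
          rw [Finset.mem_sdiff] at hx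
          exact ⟨x, hx.1, by show (if x ∈ C then u x else v x) = y; rw [if_neg hx.2]; exact hvx⟩
    choose φ hφ using key
    -- blocks
    have hblock : ∀ i : Fin n, ∃ F, F ∈ P.parts ∧ i ∈ F := by
      intro i
      obtain ⟨F, hF, hiF⟩ := P.exists_mem (Finset.mem_univ i)
      exact ⟨F, hF, hiF⟩
    choose blk hblk1 hblk2 using hblock
    have hblkuniq : ∀ (i : Fin n) (F : Finset (Fin n)), F ∈ P.parts → i ∈ F → F = blk i :=
      fun i F hF hiF => P.eq_of_mem_parts hF (hblk1 i) hiF (hblk2 i)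
    set g : Fin n → Fin n := fun i => φ (blk i) i with hg
    have gA : ∀ i, g i ∈ e (blk i) := fun i =>
      (hφ (blk i) (hblk1 i)).2.1 i (hblk2 i)
    have gC : ∀ i, (g i ∈ C' ↔ i ∈ C) := fun i =>
      (hφ (blk i) (hblk1 i)).2.2.1 i (hblk2 i)
    have ginj : Function.Injective g := by
      intro i j hij
      have hbij : blk i = blk j := by
        by_contra hne'
        have h1 : e (blk i) ≠ e (blk j) := fun hc =>
          hne' (einj _ (hblk1 i) _ (hblk1 j) hc)
        have h2 := gA i
        have h3 := gA j
        rw [hij] at h2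
        exact h1 (P'.eq_of_mem_parts (emem _ (hblk1 i)) (emem _ (hblk1 j)) h2 h3)
      have hjF : j ∈ blk i := hbij ▸ hblk2 j
      have : φ (blk i) i = φ (blk i) j := by
        rw [hg] at hij
        simpa [hbij] using hij
      exact (hφ (blk i) (hblk1 i)).1 i (hblk2 i) j hjF this
    have gbij : Function.Bijective g := (Finite.injective_iff_bijective).mp ginj
    refine ⟨Equiv.ofBijective g gbij, ?_⟩
    have main : ∀ a b : Fin n, M' (g a) (g b) = M a b := by
      intro a b
      by_cases hab : a = b
      · subst hab; rw [hdiag, hdiag']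
      have hgab : g a ≠ g b := fun hc => hab (ginj hc)
      rw [Bool.eq_iff_iff, hchar' _ _ hgab, hchar _ _ hab]
      constructor
      · rintro ⟨⟨F', hF', hga, hgb⟩, hgbC⟩
        have h1 : F' = e (blk a) := P'.eq_of_mem_parts hF' (emem _ (hblk1 a)) hga (gA a)
        have h2 : F' = e (blk b) := P'.eq_of_mem_parts hF' (emem _ (hblk1 b)) hgb (gA b)
        have h3 : blk a = blk b := einj _ (hblk1 a) _ (hblk1 b) (h1 ▸ h2)
        exact ⟨⟨blk a, hblk1 a, hblk2 a, h3 ▸ hblk2 b⟩, (gC b).mp hgbC⟩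
      · rintro ⟨⟨F, hF, ha, hb⟩, hbC⟩
        have h1 : F = blk a := hblkuniq a F hF ha
        have h2 : F = blk b := hblkuniq b F hF hb
        refine ⟨⟨e (blk a), emem _ (hblk1 a), gA a, ?_⟩, (gC b).mpr hbC⟩
        have : blk a = blk b := h1 ▸ h2
        rw [this]
        exact gA b
    intro i j
    have hi : i = Equiv.ofBijective g gbij ((Equiv.ofBijective g gbij)⁻¹ i) := by simp
    have hj : j = Equiv.ofBijective g gbij ((Equiv.ofBijective g gbij)⁻¹ j) := by simp
    calc M' i j = M' (g ((Equiv.ofBijective g gbij)⁻¹ i)) (g ((Equiv.ofBijective g gbij)⁻¹ j)) := by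
          conv_lhs => rw [hi, hj]
          rfl
      _ = M ((Equiv.ofBijective g gbij)⁻¹ i) ((Equiv.ofBijective g gbij)⁻¹ j) := main _ _
end

section
/- Corollary (Unlabeled count): for every n ≥ 3, the number of orbits of absorbing states on Fin n under the relabeling action of the symmetric group (σ • M) i j = M (σ⁻¹ i) (σ⁻¹ j) equals the number of multisets of pairs of positive integers (k, m) with 1 ≤ m ≤ k such that the sum of the first coordinates k (with multiplicity) equals n. -/
namespace AbsCount
open Finset
variable {n : ℕ}


def tset (M : Fin n → Fin n → Bool) (z : Fin n) : Finset (Fin n) :=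
  Finset.univ.filter (fun a => M z a = true)

def cfun (M : Fin n → Fin n → Bool) (z : Fin n) : Finset (Fin n) :=
  if ∀ b, M z b = true → M b z = true then insert z (tset M z) else tset M z

lemma mem_cfun {M : Fin n → Fin n → Bool} {z a : Fin n} :
    a ∈ cfun M z ↔ (M z a = true ∨ (a = z ∧ ∀ b, M z b = true → M b z = true)) := by
  unfold cfun tset
  split <;> simp [*] <;> tauto

/-- the "good" predicate on core-set functions -/
def Good (c : Fin n → Finset (Fin n)) : Prop :=
  ∀ z, (c z).Nonempty ∧ ∀ a ∈ c z, c a = c z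

variable {M : Fin n → Fin n → Bool}

lemma ne_of_trust (hd : ∀ i, M i i = false) {z a : Fin n} (h : M z a = true) : z ≠ a := by
  rintro rfl; rw [hd] at h; exact absurd h (by simp)

lemma core_of_trusted (hd : ∀ i, M i i = false) (hA : Absorbing M) {z a : Fin n}
    (h : M z a = true) : ∀ b, M a b = true → M b a = true := by
  intro b hb
  have hza : z ≠ a := ne_of_trust hd h
  have hab : a ≠ b := ne_of_trust hd hb
  by_cases hbz : b = z
  · subst hbz; exact h
  · have h1 : M z b = M a b := hA a z b (Ne.symm hza) hab (fun hh => hbz hh.symm) h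
    have hzb : M z b = true := h1.trans hb
    have h2 : M z a = M b a := hA b z a hbz (Ne.symm hab) hza hzb
    exact h2.symm.trans h

lemma cfun_eq_of_trust (hd : ∀ i, M i i = false) (hA : Absorbing M) {z a : Fin n}
    (h : M z a = true) : cfun M a = cfun M z := by
  have hza : z ≠ a := ne_of_trust hd h
  have hacore : ∀ b, M a b = true → M b a = true := core_of_trusted hd hA h
  ext y
  rw [mem_cfun, mem_cfun]
  by_cases hya : y = a
  · subst hya
    exact iff_of_true (Or.inr ⟨rfl, hacore⟩) (Or.inl h)
  by_cases hyz : y = z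
  · subst hyz
    constructor
    · rintro (hmaz | ⟨rfl, _⟩)
      · exact Or.inr ⟨rfl, core_of_trusted hd hA hmaz⟩
      · exact absurd rfl hza
    · rintro (hmzz | ⟨_, hcz⟩)
      · rw [hd] at hmzz; exact absurd hmzz (by simp)
      · exact Or.inl (hcz a h)
  · have key : M z y = M a y := hA a z y (Ne.symm hza) (fun hh => hya hh.symm) (fun hh => hyz hh.symm) h
    constructor
    · rintro (hay | ⟨rfl, _⟩)
      · exact Or.inl (key.trans hay)
      · exact absurd rfl hya
    · rintro (hzy | ⟨rfl, _⟩)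
      · exact Or.inl (key.symm.trans hzy)
      · exact absurd rfl hyz

lemma cfun_good (hd : ∀ i, M i i = false) (hA : Absorbing M) : Good (cfun M) := by
  intro z
  constructor
  · by_cases hc : ∀ b, M z b = true → M b z = true
    · exact ⟨z, mem_cfun.2 (Or.inr ⟨rfl, hc⟩)⟩
    · push_neg at hc
      obtain ⟨b, hb, _⟩ := hc
      exact ⟨b, mem_cfun.2 (Or.inl hb)⟩
  · intro a ha
    rcases mem_cfun.1 ha with h | ⟨rfl, _⟩
    · exact cfun_eq_of_trust hd hA h
    · rfl

lemma cfun_recover (hd : ∀ i, M i i = false) {z a : Fin n} :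
    M z a = true ↔ (a ∈ cfun M z ∧ a ≠ z) := by
  constructor
  · intro h
    exact ⟨mem_cfun.2 (Or.inl h), (ne_of_trust hd h).symm⟩
  · rintro ⟨ha, hne⟩
    rcases mem_cfun.1 ha with h | ⟨rfl, _⟩
    · exact h
    · exact absurd rfl hne

/-- reconstruction from a good core function -/
lemma good_diag (c : Fin n → Finset (Fin n)) :
    ∀ i, (fun z a => decide (a ∈ c z ∧ a ≠ z)) i i = false := by
  intro i; simp

lemma good_absorbing {c : Fin n → Finset (Fin n)} (hc : Good c) :
    Absorbing (fun z a => decide (a ∈ c z ∧ a ≠ z)) := by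
  intro a z y haz hay hzy h
  simp only [decide_eq_true_eq] at h
  obtain ⟨hmem, hne⟩ := h
  have hcz : c a = c z := (hc z).2 a hmem
  rw [decide_eq_decide]
  rw [hcz]
  exact and_congr_right' (by simp [Ne, eq_comm (a := y)]; tauto)

lemma good_cfun {c : Fin n → Finset (Fin n)} (hc : Good c) :
    cfun (fun z a => decide (a ∈ c z ∧ a ≠ z)) = c := by
  funext z
  ext a
  rw [mem_cfun]
  simp only [decide_eq_true_eq]
  by_cases haz : a = z
  · subst haz
    simp only [ne_eq, not_true_eq_false, and_false, false_or, true_and]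
    constructor
    · intro hcore
      obtain ⟨b, hb⟩ := (hc a).1
      by_cases hba : b = a
      · subst hba; exact hb
      · have := hcore b ⟨hb, hba⟩
        rw [← (hc a).2 b hb]
        exact this.1
    · intro ha
      rintro b ⟨hb, hba⟩
      refine ⟨?_, fun hh => hba hh.symm⟩
      rw [(hc a).2 b hb]
      exact ha
  · simp [haz]

def theta (c : Fin n → Finset (Fin n)) : Multiset (ℕ × ℕ) :=
  (Finset.univ.image c).val.map
    (fun v => ((Finset.univ.filter (fun z => c z = v)).card, v.card))

lemma theta_mem {c : Fin n → Finset (Fin n)} (hc : Good c) :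
    ∀ p ∈ theta c, 1 ≤ p.2 ∧ p.2 ≤ p.1 := by
  intro p hp
  rw [theta, Multiset.mem_map] at hp
  obtain ⟨v, hv, rfl⟩ := hp
  rw [← Finset.mem_def, Finset.mem_image] at hv
  obtain ⟨x, -, rfl⟩ := hv
  constructor
  · exact (hc x).1.card_pos
  · refine Finset.card_le_card (s := c x) (t := Finset.univ.filter (fun z => c z = c x)) ?_
    intro a ha
    simp only [Finset.mem_filter, Finset.mem_univ, true_and]
    exact (hc x).2 a ha

lemma theta_sum (c : Fin n → Finset (Fin n)) :
    ((theta c).map Prod.fst).sum = n := by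
  rw [theta, Multiset.map_map]
  have : (Finset.univ : Finset (Fin n)).card =
      ∑ v ∈ Finset.univ.image c, (Finset.univ.filter (fun z => c z = v)).card :=
    Finset.card_eq_sum_card_image c Finset.univ
  simp only [Finset.card_univ, Fintype.card_fin] at this
  rw [Finset.sum] at this
  exact this.symm

lemma filter_comp_equiv (σ : Equiv.Perm (Fin n)) (p : Fin n → Prop) [DecidablePred p] :
    (Finset.univ.filter (fun z => p (σ⁻¹ z))) = (Finset.univ.filter p).image σ := by
  ext a
  simp only [Finset.mem_filter, Finset.mem_univ, true_and, Finset.mem_image]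
  constructor
  · intro h; exact ⟨σ⁻¹ a, h, by simp⟩
  · rintro ⟨b, hb, rfl⟩; simpa using hb

lemma theta_relabel (c : Fin n → Finset (Fin n)) (σ : Equiv.Perm (Fin n)) :
    theta (fun z => (c (σ⁻¹ z)).image σ) = theta c := by
  have hinj : Function.Injective (fun v : Finset (Fin n) => v.image σ) :=
    Finset.image_injective σ.injective
  have himg : Finset.univ.image (fun z => (c (σ⁻¹ z)).image σ) =
      (Finset.univ.image c).image (fun v => v.image σ) := by
    rw [Finset.image_image]
    ext v
    simp only [Finset.mem_image, Finset.mem_univ, true_and, Function.comp]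
    constructor
    · rintro ⟨z, rfl⟩; exact ⟨σ⁻¹ z, rfl⟩
    · rintro ⟨z, rfl⟩; exact ⟨σ z, by simp⟩
  rw [theta, himg, Finset.image_val_of_injOn (hinj.injOn), Multiset.map_map]
  rw [theta]
  apply Multiset.map_congr rfl
  intro v hv
  simp only [Function.comp]
  congr 1
  · have h1 : Finset.univ.filter (fun z => (c (σ⁻¹ z)).image σ = v.image σ)
        = Finset.univ.filter (fun z => c (σ⁻¹ z) = v) := by
      apply Finset.filter_congr
      intro z _
      exact ⟨fun h => hinj h, fun h => by rw [h]⟩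
    rw [h1, filter_comp_equiv σ (fun z => c z = v),
      Finset.card_image_of_injective _ σ.injective]
  · exact Finset.card_image_of_injective _ σ.injective


lemma glue {α β κ : Type*} [Fintype α] [Fintype β] [DecidableEq κ]
    (f : α → κ) (g : β → κ)
    (h : ∀ k, Fintype.card {a // f a = k} = Fintype.card {b // g b = k}) :
    ∃ e : α ≃ β, ∀ a, g (e a) = f a := by
  have eqs : ∀ k : κ, {a // f a = k} ≃ {b // g b = k} := fun k =>
    Fintype.equivOfCardEq (h k)
  refine ⟨(Equiv.sigmaFiberEquiv f).symm.trans
    ((Equiv.sigmaCongrRight eqs).trans (Equiv.sigmaFiberEquiv g)), fun a => ?_⟩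
  exact ((eqs (f a)) ⟨a, rfl⟩).2

lemma card_subtype_coe {γ : Type*} [DecidableEq γ] {s : Finset γ}
    (p : γ → Prop) [DecidablePred p] :
    Fintype.card {x : {a // a ∈ s} // p ↑x} = (s.filter p).card := by
  rw [← Fintype.card_coe (s.filter p)]
  exact Fintype.card_congr ((Equiv.subtypeSubtypeEquivSubtypeInter _ p).trans
    (Equiv.subtypeEquivRight (fun a => (Finset.mem_filter (s := s)).symm)))

lemma exists_perm {c c' : Fin n → Finset (Fin n)} (hc : Good c) (hc' : Good c')
    (h : theta c' = theta c) :
    ∃ σ : Equiv.Perm (Fin n), ∀ z b : Fin n, (σ b ∈ c' (σ z) ↔ b ∈ c z) := by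
  classical
  set V : Finset (Finset (Fin n)) := Finset.univ.image c with hV
  set V' : Finset (Finset (Fin n)) := Finset.univ.image c' with hV'
  set gM : Finset (Fin n) → ℕ × ℕ :=
    fun v => ((Finset.univ.filter (fun z => c z = v)).card, v.card) with hgM
  set gM' : Finset (Fin n) → ℕ × ℕ :=
    fun v => ((Finset.univ.filter (fun z => c' z = v)).card, v.card) with hgM'
  -- step 1 : matching of cores
  obtain ⟨e1, he1⟩ := glue (fun v : {v // v ∈ V} => gM ↑v)
      (fun w : {w // w ∈ V'} => gM' ↑w) (by
    intro p
    have hL := card_subtype_coe (s := V) (fun v => gM v = p)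
    have hR := card_subtype_coe (s := V') (fun w => gM' w = p)
    refine Eq.trans hL (Eq.trans ?_ hR.symm)
    have hcount : Multiset.count p (V.val.map gM) = Multiset.count p (V'.val.map gM') := by
      rw [show V.val.map gM = theta c from rfl, show V'.val.map gM' = theta c' from rfl, h]
    rw [Multiset.count_map, Multiset.count_map] at hcount
    rw [Finset.card_filter, Finset.card_filter] at *
    simp [Finset.sum_ite_eq, eq_comm] at hcount ⊢; exact hcount)
  -- step 2 : build the permutation by gluing fibers
  have hmemV : ∀ z, c z ∈ V := fun z => Finset.mem_image_of_mem c (Finset.mem_univ z)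
  have hmemV' : ∀ z, c' z ∈ V' := fun z => Finset.mem_image_of_mem c' (Finset.mem_univ z)
  set f2 : Fin n → Finset (Fin n) × Bool :=
    fun z => (↑(e1 ⟨c z, hmemV z⟩), decide (z ∈ c z)) with hf2
  set g2 : Fin n → Finset (Fin n) × Bool :=
    fun x => (c' x, decide (x ∈ c' x)) with hg2
  obtain ⟨e2, he2⟩ := glue f2 g2 (by
    intro k
    obtain ⟨w, bb⟩ := k
    rw [Fintype.card_subtype, Fintype.card_subtype]
    by_cases hw : w ∈ V'
    · set v0 : {v // v ∈ V} := e1.symm ⟨w, hw⟩ with hv0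
      have he1v0 : e1 v0 = ⟨w, hw⟩ := e1.apply_symm_apply _
      have hkey : ∀ z, (↑(e1 ⟨c z, hmemV z⟩) : Finset (Fin n)) = w ↔ c z = ↑v0 := by
        intro z
        constructor
        · intro hh
          have : e1 ⟨c z, hmemV z⟩ = ⟨w, hw⟩ := Subtype.ext hh
          have := congrArg e1.symm this
          rw [e1.symm_apply_apply] at this
          exact congrArg Subtype.val this
        · intro hh
          have : (⟨c z, hmemV z⟩ : {v // v ∈ V}) = v0 := Subtype.ext hh
          rw [this, he1v0]
      have hgw : gM' w = gM ↑v0 := by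
        have := he1 v0
        rw [he1v0] at this
        exact this
      have hfilf : Finset.univ.filter (fun z => f2 z = (w, bb)) =
          Finset.univ.filter (fun z => c z = ↑v0 ∧ decide (z ∈ c z) = bb) := by
        apply Finset.filter_congr
        intro z _
        rw [hf2, Prod.mk.injEq, hkey z]
      have hfilg : Finset.univ.filter (fun x => g2 x = (w, bb)) =
          Finset.univ.filter (fun x => c' x = w ∧ decide (x ∈ c' x) = bb) := by
        apply Finset.filter_congr
        intro x _
        rw [hg2, Prod.mk.injEq]
      rw [hfilf, hfilg]
      -- true-fibers are the cores themselves
      have hcoreL : Finset.univ.filter (fun z => c z = ↑v0 ∧ decide (z ∈ c z) = true)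
          = (↑v0 : Finset (Fin n)) := by
        ext z
        simp only [Finset.mem_filter, Finset.mem_univ, true_and, decide_eq_true_eq]
        constructor
        · rintro ⟨hh, hz⟩; rw [← hh]; exact hz
        · intro hz
          obtain ⟨x, -, hx⟩ := Finset.mem_image.1 v0.2
          have hcz : c z = ↑v0 := by rw [← hx] at hz ⊢; exact (hc x).2 z hz
          exact ⟨hcz, by rw [hcz]; exact hz⟩
      have hcoreR : Finset.univ.filter (fun x => c' x = w ∧ decide (x ∈ c' x) = true)
          = w := by
        ext x
        simp only [Finset.mem_filter, Finset.mem_univ, true_and, decide_eq_true_eq]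
        constructor
        · rintro ⟨hh, hx⟩; rw [← hh]; exact hx
        · intro hx
          obtain ⟨y, -, hy⟩ := Finset.mem_image.1 hw
          have hcx : c' x = w := by rw [← hy] at hx ⊢; exact (hc' y).2 x hx
          exact ⟨hcx, by rw [hcx]; exact hx⟩
      have hcards : (↑v0 : Finset (Fin n)).card = w.card := by
        have := congrArg Prod.snd hgw
        simpa [hgM, hgM'] using this.symm
      have hfib : (Finset.univ.filter (fun z => c z = ↑v0)).card
          = (Finset.univ.filter (fun x => c' x = w)).card := by
        have := congrArg Prod.fst hgw
        simpa [hgM, hgM'] using this.symm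
      cases bb
      · -- false case : complements
        have hsplitL := Finset.card_filter_add_card_filter_not
          (s := Finset.univ.filter (fun z => c z = ↑v0))
          (p := fun z => decide (z ∈ c z) = true)
        have hsplitR := Finset.card_filter_add_card_filter_not
          (s := Finset.univ.filter (fun x => c' x = w))
          (p := fun x => decide (x ∈ c' x) = true)
        simp only [Finset.filter_filter] at hsplitL hsplitR
        have hL : Finset.univ.filter (fun z => c z = ↑v0 ∧ decide (z ∈ c z) = false)
            = Finset.univ.filter (fun z => c z = ↑v0 ∧ ¬ (decide (z ∈ c z) = true)) := by
          apply Finset.filter_congr; intro z _; simp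
        have hR : Finset.univ.filter (fun x => c' x = w ∧ decide (x ∈ c' x) = false)
            = Finset.univ.filter (fun x => c' x = w ∧ ¬ (decide (x ∈ c' x) = true)) := by
          apply Finset.filter_congr; intro x _; simp
        rw [hL, hR]
        have e1' : (Finset.univ.filter (fun z => c z = ↑v0 ∧ decide (z ∈ c z) = true)).card = (↑v0 : Finset (Fin n)).card := by rw [hcoreL]
        have e2' : (Finset.univ.filter (fun x => c' x = w ∧ decide (x ∈ c' x) = true)).card = w.card := by rw [hcoreR]
        omega
      · rw [hcoreL, hcoreR, hcards]
    · -- w not a core of c' : both fibers empty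
      have hL : Finset.univ.filter (fun z => f2 z = (w, bb)) = ∅ := by
        apply Finset.filter_false_of_mem
        intro z _
        rw [hf2, Prod.mk.injEq]
        rintro ⟨hh, -⟩
        exact hw (hh ▸ (e1 ⟨c z, hmemV z⟩).2)
      have hR : Finset.univ.filter (fun x => g2 x = (w, bb)) = ∅ := by
        apply Finset.filter_false_of_mem
        intro x _
        rw [hg2, Prod.mk.injEq]
        rintro ⟨hh, -⟩
        exact hw (hh ▸ hmemV' x)
      rw [hL, hR])
  -- step 3 : conclude
  refine ⟨e2, fun z b => ?_⟩
  have hz1 : c' (e2 z) = ↑(e1 ⟨c z, hmemV z⟩) := congrArg Prod.fst (he2 z)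
  have hb1 : c' (e2 b) = ↑(e1 ⟨c b, hmemV b⟩) := congrArg Prod.fst (he2 b)
  have hz2 : decide ((e2 b) ∈ c' (e2 b)) = decide (b ∈ c b) := congrArg Prod.snd (he2 b)
  rw [decide_eq_decide] at hz2
  constructor
  · intro hmem
    have hcc : c' (e2 b) = c' (e2 z) := (hc' (e2 z)).2 _ hmem
    have hbb : b ∈ c b := by
      apply hz2.1
      rw [hcc]; exact hmem
    have : (⟨c b, hmemV b⟩ : {v // v ∈ V}) = ⟨c z, hmemV z⟩ :=
      e1.injective (Subtype.ext (by rw [← hb1, ← hz1, hcc]))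
    have hcbz : c b = c z := congrArg Subtype.val this
    rw [← hcbz]; exact hbb
  · intro hmem
    have hcbz : c b = c z := (hc z).2 b hmem
    have hbb : b ∈ c b := hcbz ▸ hmem
    have : e2 b ∈ c' (e2 b) := hz2.2 hbb
    rw [hb1] at this
    rw [hz1]
    have heq : (⟨c b, hmemV b⟩ : {v // v ∈ V}) = ⟨c z, hmemV z⟩ := Subtype.ext hcbz
    rw [heq] at this
    exact this


lemma card_interval (lo hi : ℕ) (hhi : hi ≤ n) :
    (Finset.univ.filter (fun a : Fin n => lo ≤ ↑a ∧ ↑a < hi)).card = hi - lo := by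
  have hset : Finset.univ.filter (fun a : Fin n => lo ≤ ↑a ∧ ↑a < hi) =
      Finset.attachFin (Finset.Ico lo hi)
        (fun m hm => lt_of_lt_of_le (Finset.mem_Ico.1 hm).2 hhi) := by
    ext a
    simp [Finset.mem_attachFin, Finset.mem_Ico]
  rw [hset, Finset.card_attachFin, Nat.card_Ico]

lemma range_map_getD {α : Type*} (L : List α) (d : α) :
    (List.range L.length).map (fun i => L.getD i d) = L := by
  induction L with
  | nil => simp
  | cons a t ih =>
    rw [List.length_cons, List.range_succ_eq_map, List.map_cons, List.map_map]
    have hfun : ((fun i => (a :: t).getD i d) ∘ Nat.succ) = fun i => t.getD i d := by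
      funext i
      simp [List.getD_cons_succ]
    rw [List.getD_cons_zero, hfun, ih]

lemma exists_good_theta (s : Multiset (ℕ × ℕ)) (hs1 : ∀ p ∈ s, 1 ≤ p.2 ∧ p.2 ≤ p.1)
    (hs2 : (s.map Prod.fst).sum = n) :
    ∃ c : Fin n → Finset (Fin n), Good c ∧ theta c = s := by
  classical
  set L : List (ℕ × ℕ) := s.toList with hLdef
  set r : ℕ := L.length with hrdef
  set kk : ℕ → ℕ := fun i => (L.getD i (0, 0)).1 with hkk
  set mm : ℕ → ℕ := fun i => (L.getD i (0, 0)).2 with hmm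
  set o : ℕ → ℕ := fun i => ((L.take i).map Prod.fst).sum with ho
  have hmemL : ∀ i, i < r → L.getD i (0,0) ∈ s := by
    intro i hi
    rw [← Multiset.mem_toList, ← hLdef]
    rw [List.getD_eq_getElem L (0,0) hi]
    exact List.getElem_mem hi
  have hk1 : ∀ i, i < r → 1 ≤ mm i ∧ mm i ≤ kk i := fun i hi => hs1 _ (hmemL i hi)
  have ho0 : o 0 = 0 := by simp [ho]
  have hostep : ∀ i, i < r → o (i + 1) = o i + kk i := by
    intro i hi
    show ((L.take (i+1)).map Prod.fst).sum = ((L.take i).map Prod.fst).sum + kk i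
    rw [List.take_succ, List.map_append, List.sum_append, List.getElem?_eq_getElem hi]
    simp [hkk, List.getD, List.getElem?_eq_getElem hi]
  have homono : Monotone o := by
    apply monotone_nat_of_le_succ
    intro i
    by_cases hi : i < r
    · rw [hostep i hi]; exact Nat.le_add_right _ _
    · have h1 : L.take (i+1) = L := List.take_of_length_le (by omega)
      have h2 : L.take i = L := List.take_of_length_le (by omega)
      show ((L.take i).map Prod.fst).sum ≤ ((L.take (i+1)).map Prod.fst).sum
      rw [h1, h2]
  have hor : o r = n := by
    have h1 : (s.map Prod.fst).sum = (L.map Prod.fst).sum := by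
      rw [← Multiset.coe_toList s, ← hLdef]
      simp
    show ((L.take r).map Prod.fst).sum = n
    rw [hrdef, List.take_length]
    omega
  set blk : Fin n → ℕ := fun z => Nat.findGreatest (fun i => o i ≤ ↑z) r with hblk
  have hb1 : ∀ z : Fin n, o (blk z) ≤ ↑z := by
    intro z
    exact Nat.findGreatest_spec (P := fun i => o i ≤ ↑z) (m := 0) (Nat.zero_le r)
      (show o 0 ≤ (z : ℕ) by rw [ho0]; exact Nat.zero_le _)
  have hb2 : ∀ z : Fin n, blk z ≤ r := fun z => Nat.findGreatest_le r
  have hb3 : ∀ z : Fin n, blk z < r := by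
    intro z
    rcases Nat.lt_or_ge (blk z) r with h | h
    · exact h
    · exfalso
      have h1 : blk z = r := le_antisymm (hb2 z) h
      have h2 := hb1 z
      rw [h1, hor] at h2
      exact absurd z.isLt (by omega)
  have hb4 : ∀ z : Fin n, ↑z < o (blk z + 1) := by
    intro z
    have := Nat.findGreatest_is_greatest (P := fun i => o i ≤ ↑z)
      (n := r) (k := blk z + 1) (Nat.lt_succ_self _) (hb3 z)
    omega
  have hb5 : ∀ i, i < r → ∀ z : Fin n, o i ≤ ↑z → ↑z < o (i + 1) → blk z = i := by
    intro i hi z hoz hz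
    have hle : i ≤ blk z := Nat.le_findGreatest (le_of_lt hi) hoz
    rcases Nat.eq_or_lt_of_le hle with h | h
    · exact h.symm
    · exfalso
      have : o (i + 1) ≤ o (blk z) := homono h
      have := hb1 z
      omega
  set core : ℕ → Finset (Fin n) :=
    fun i => Finset.univ.filter (fun a : Fin n => o i ≤ ↑a ∧ ↑a < o i + mm i) with hcore
  set c : Fin n → Finset (Fin n) := fun z => core (blk z) with hc
  have hmem_core : ∀ i, i < r → ∀ a : Fin n, a ∈ core i → blk a = i := by
    intro i hi a ha
    rw [hcore] at ha
    simp only [Finset.mem_filter, Finset.mem_univ, true_and] at ha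
    refine hb5 i hi a ha.1 ?_
    have := (hk1 i hi).2
    have := hostep i hi
    omega
  have hoin : ∀ i, i < r → o i < n := by
    intro i hi
    have h1 := hostep i hi
    have h2 := (hk1 i hi).1
    have h3 := (hk1 i hi).2
    have h4 : o (i + 1) ≤ o r := homono hi
    omega
  have helt : ∀ i (hi : i < r), (⟨o i, hoin i hi⟩ : Fin n) ∈ core i := by
    intro i hi
    rw [hcore]
    simp only [Finset.mem_filter, Finset.mem_univ, true_and]
    exact ⟨le_refl _, by have := (hk1 i hi).1; omega⟩
  have hblk_oi : ∀ i (hi : i < r), blk ⟨o i, hoin i hi⟩ = i :=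
    fun i hi => hmem_core i hi _ (helt i hi)
  refine ⟨c, ?_, ?_⟩
  · intro z
    constructor
    · exact ⟨⟨o (blk z), hoin _ (hb3 z)⟩, helt _ (hb3 z)⟩
    · intro a ha
      rw [hc]
      simp only
      rw [hmem_core _ (hb3 z) a ha]
  · -- theta c = s
    have himg : Finset.univ.image c = (Finset.range r).image core := by
      ext v
      simp only [Finset.mem_image, Finset.mem_univ, true_and, Finset.mem_range]
      constructor
      · rintro ⟨z, rfl⟩; exact ⟨blk z, hb3 z, rfl⟩
      · rintro ⟨i, hi, rfl⟩
        exact ⟨⟨o i, hoin i hi⟩, by rw [hc]; simp only; rw [hblk_oi i hi]⟩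
    have hinj : Set.InjOn core (Finset.range r) := by
      intro i hi j hj hij
      simp only [Finset.coe_range, Set.mem_Iio] at hi hj
      have h1 := helt i hi
      rw [hij] at h1
      have h2 := hmem_core j hj _ h1
      rw [hblk_oi i hi] at h2
      exact h2
    rw [theta, himg, Finset.image_val_of_injOn hinj, Multiset.map_map]
    have hfiber : ∀ i, i < r →
        Finset.univ.filter (fun z => c z = core i) =
        Finset.univ.filter (fun z : Fin n => o i ≤ ↑z ∧ ↑z < o (i + 1)) := by
      intro i hi
      apply Finset.filter_congr
      intro z _
      constructor
      · intro hcz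
        have hbz : blk z = i := by
          have : core (blk z) = core i := hcz
          exact hinj (by simp [hb3 z]) (by simp [hi]) this
        rw [← hbz]
        exact ⟨hb1 z, hb4 z⟩
      · rintro ⟨h1, h2⟩
        rw [hc]
        simp only
        rw [hb5 i hi z h1 h2]
    have hgval : ∀ i ∈ (Finset.range r).val,
        ((Finset.univ.filter (fun z => c z = core i)).card, (core i).card)
          = L.getD i (0, 0) := by
      intro i hi
      rw [← Finset.mem_def, Finset.mem_range] at hi
      have hcard1 : (core i).card = mm i := by
        rw [hcore]
        simp only
        rw [card_interval]
        · omega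
        · have := hostep i hi
          have := (hk1 i hi).2
          have : o (i+1) ≤ o r := homono hi
          omega
      have hcard2 : (Finset.univ.filter (fun z => c z = core i)).card = kk i := by
        rw [hfiber i hi, card_interval]
        · have := hostep i hi; omega
        · have : o (i+1) ≤ o r := homono hi; omega
      rw [hcard1, hcard2]
    have hmapeq : Multiset.map
        ((fun v => ((Finset.univ.filter (fun z => c z = v)).card, v.card)) ∘ core)
        (Finset.range r).val =
        Multiset.map (fun i => L.getD i (0, 0)) (Finset.range r).val :=
      Multiset.map_congr rfl (fun i hi => hgval i hi)
    rw [hmapeq]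
    have : (Finset.range r).val = ((List.range r : List ℕ) : Multiset ℕ) := rfl
    rw [this]
    rw [Multiset.map_coe]
    rw [range_map_getD L (0,0)]
    exact Multiset.coe_toList s


lemma mem_image_perm {s : Finset (Fin n)} {σ : Equiv.Perm (Fin n)} {a : Fin n} :
    a ∈ s.image σ ↔ σ⁻¹ a ∈ s := by
  rw [Finset.mem_image]
  constructor
  · rintro ⟨b, hb, rfl⟩; simpa using hb
  · intro hb; exact ⟨σ⁻¹ a, hb, by simp⟩

lemma cfun_relabel {M M' : Fin n → Fin n → Bool} (σ : Equiv.Perm (Fin n))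
    (h : ∀ i j, M' i j = M (σ⁻¹ i) (σ⁻¹ j)) (z : Fin n) :
    cfun M' z = (cfun M (σ⁻¹ z)).image σ := by
  ext a
  rw [mem_image_perm, mem_cfun, mem_cfun, h z a]
  apply or_congr Iff.rfl
  apply and_congr
  · exact ⟨fun hh => by rw [hh], fun hh => (Equiv.injective _) hh⟩
  · constructor
    · intro hcore b hb
      have h1 := hcore (σ b) (by rw [h]; simpa using hb)
      rw [h] at h1
      simpa using h1
    · intro hcore b hb
      rw [h] at hb ⊢
      exact hcore _ hb

end AbsCount

/-- Unlabeled count: the number of orbits of absorbing states under the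
relabeling action `(σ • M) i j = M (σ⁻¹ i) (σ⁻¹ j)` of the symmetric group
equals the number of multisets of pairs `(k, m)` with `1 ≤ m ≤ k` whose first
coordinates sum to `n`. -/
theorem card_orbits_absorbing {n : ℕ} (hn : 3 ≤ n) :
    Nat.card (Quot (fun M M' :
        {M : Fin n → Fin n → Bool // (∀ i, M i i = false) ∧ Absorbing M} =>
      ∃ σ : Equiv.Perm (Fin n), ∀ i j : Fin n,
        M'.1 i j = M.1 (σ⁻¹ i) (σ⁻¹ j))) =
    Nat.card {s : Multiset (ℕ × ℕ) //
      (∀ p ∈ s, 1 ≤ p.2 ∧ p.2 ≤ p.1) ∧ (s.map Prod.fst).sum = n} := by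
  classical
  set rel : {M : Fin n → Fin n → Bool // (∀ i, M i i = false) ∧ Absorbing M} →
      {M : Fin n → Fin n → Bool // (∀ i, M i i = false) ∧ Absorbing M} → Prop :=
    fun M M' => ∃ σ : Equiv.Perm (Fin n), ∀ i j : Fin n,
      M'.1 i j = M.1 (σ⁻¹ i) (σ⁻¹ j) with hrel
  set F : {M : Fin n → Fin n → Bool // (∀ i, M i i = false) ∧ Absorbing M} →
      {s : Multiset (ℕ × ℕ) //
        (∀ p ∈ s, 1 ≤ p.2 ∧ p.2 ≤ p.1) ∧ (s.map Prod.fst).sum = n} :=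
    fun M => ⟨AbsCount.theta (AbsCount.cfun M.1),
      AbsCount.theta_mem (AbsCount.cfun_good M.2.1 M.2.2),
      AbsCount.theta_sum _⟩ with hF
  have hresp : ∀ M M', rel M M' → F M = F M' := by
    rintro M M' ⟨σ, hσ⟩
    apply Subtype.ext
    show AbsCount.theta (AbsCount.cfun M.1) = AbsCount.theta (AbsCount.cfun M'.1)
    have hcf : AbsCount.cfun M'.1 =
        fun z => (AbsCount.cfun M.1 (σ⁻¹ z)).image σ :=
      funext (AbsCount.cfun_relabel σ hσ)
    rw [hcf, AbsCount.theta_relabel]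
  refine Nat.card_eq_of_bijective (Quot.lift F hresp) ⟨?_, ?_⟩
  · -- injective
    intro x y
    induction x using Quot.ind with
    | _ M =>
    induction y using Quot.ind with
    | _ M' =>
    intro hFe
    have hθ : AbsCount.theta (AbsCount.cfun M'.1) = AbsCount.theta (AbsCount.cfun M.1) := by
      have := Subtype.ext_iff.1 (hFe : F M = F M')
      exact this.symm
    obtain ⟨σ, hσ⟩ := AbsCount.exists_perm
      (AbsCount.cfun_good M.2.1 M.2.2) (AbsCount.cfun_good M'.2.1 M'.2.2) hθ
    apply Quot.sound
    refine ⟨σ, fun i j => ?_⟩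
    have h1 : M'.1 i j = true ↔ M.1 (σ⁻¹ i) (σ⁻¹ j) = true := by
      rw [AbsCount.cfun_recover M'.2.1, AbsCount.cfun_recover M.2.1]
      have h2 : j ∈ AbsCount.cfun M'.1 i ↔
          σ⁻¹ j ∈ AbsCount.cfun M.1 (σ⁻¹ i) := by
        have := hσ (σ⁻¹ i) (σ⁻¹ j)
        simpa using this
      rw [h2]
      apply and_congr Iff.rfl
      exact not_congr ⟨fun h3 => by rw [h3], fun h3 => (Equiv.injective _) h3⟩
    cases hb : M'.1 i j <;> cases hb' : M.1 (σ⁻¹ i) (σ⁻¹ j) <;> simp_all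
  · -- surjective
    rintro ⟨s, hs1, hs2⟩
    obtain ⟨c, hGood, hθ⟩ := AbsCount.exists_good_theta s hs1 hs2
    refine ⟨Quot.mk rel ⟨fun z a => decide (a ∈ c z ∧ a ≠ z),
      AbsCount.good_diag c, AbsCount.good_absorbing hGood⟩, ?_⟩
    apply Subtype.ext
    show AbsCount.theta (AbsCount.cfun _) = s
    rw [AbsCount.good_cfun hGood, hθ]
end

section
/- Generating function for the unlabeled count: let T(n) denote the number of multisets of pairs of positive integers (k, m) with 1 ≤ m ≤ k whose first coordinates sum (with multiplicity) to n. Then for every n ≥ 1, T(n) equals the coefficient of X^n in the finite product Π_{k=1}^{n} ((1 − X^k)^k)⁻¹ taken in the formal power series ring ℚ⟦X⟧. (This is MacMahon's generating function Π_{k ≥ 1} 1/(1 − X^k)^k for plane partitions, truncated at k = n, which suffices since higher factors do not affect the coefficient of X^n.) -/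
open PowerSeries

/-- `T n` is the number of multisets of pairs `(k, m)` of positive integers
with `1 ≤ m ≤ k` whose first coordinates sum (with multiplicity) to `n`. -/
noncomputable def T (n : ℕ) : ℕ :=
  Nat.card {s : Multiset (ℕ × ℕ) //
    (∀ p ∈ s, 1 ≤ p.2 ∧ p.2 ≤ p.1) ∧ (s.map Prod.fst).sum = n}

namespace MacMahonAux

open Finset

/-- The geometric series `∑_{k ∣ j} X^j`. -/
noncomputable def geom (k : ℕ) : PowerSeries ℚ :=
  PowerSeries.mk fun j => if k ∣ j then 1 else 0

lemma geom_mul (k : ℕ) (hk : 1 ≤ k) :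
    geom k * (1 - (X : PowerSeries ℚ) ^ k) = 1 := by
  ext j
  rw [mul_sub, mul_one, map_sub, PowerSeries.coeff_mul_X_pow']
  simp only [geom, coeff_mk, coeff_one]
  by_cases hkj : k ≤ j
  · have hj0 : j ≠ 0 := by omega
    have hiff : k ∣ j ↔ k ∣ j - k := by
      constructor
      · intro h; exact Nat.dvd_sub h dvd_rfl
      · intro h
        have := Nat.sub_add_cancel hkj
        rw [← this]
        exact Nat.dvd_add h dvd_rfl
    rw [if_pos hkj, if_neg hj0]
    by_cases h : k ∣ j - k
    · rw [if_pos (hiff.mpr h), if_pos h, sub_self]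
    · rw [if_neg (fun hh => h (hiff.mp hh)), if_neg h, sub_self]
  · rw [if_neg hkj]
    by_cases hj0 : j = 0
    · subst hj0; simp
    · have hnd : ¬ k ∣ j := fun h => hkj (Nat.le_of_dvd (Nat.pos_of_ne_zero hj0) h)
      simp [hnd, hj0]

lemma inv_pow_eq (k : ℕ) (hk : 1 ≤ k) :
    (((1 : PowerSeries ℚ) - X ^ k) ^ k)⁻¹ = geom k ^ k := by
  have hc : constantCoeff (((1 : PowerSeries ℚ) - X ^ k) ^ k) ≠ 0 := by
    have : constantCoeff ((1 : PowerSeries ℚ) - X ^ k) = 1 := by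
      simp [map_sub, map_pow, constantCoeff_X, zero_pow (by omega : k ≠ 0)]
    rw [map_pow, this, one_pow]
    exact one_ne_zero
  rw [PowerSeries.inv_eq_iff_mul_eq_one hc, ← mul_pow, geom_mul k hk, one_pow]

/-- The finset of pairs `(k, m)` with `1 ≤ m ≤ k ≤ n`. -/
noncomputable def P (n : ℕ) : Finset (ℕ × ℕ) :=
  ((Finset.Icc 1 n).sigma fun k => Finset.Icc 1 k).map
    ⟨fun x => (x.1, x.2), by
      rintro ⟨a1, a2⟩ ⟨b1, b2⟩ h
      simp only [Prod.mk.injEq] at h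
      obtain ⟨rfl, rfl⟩ := h
      rfl⟩

lemma mem_P {n : ℕ} {p : ℕ × ℕ} :
    p ∈ P n ↔ 1 ≤ p.2 ∧ p.2 ≤ p.1 ∧ p.1 ≤ n := by
  simp only [P, mem_map, mem_sigma, mem_Icc, Function.Embedding.coeFn_mk]
  constructor
  · rintro ⟨⟨k, m⟩, ⟨⟨hk1, hkn⟩, hm1, hmk⟩, rfl⟩
    exact ⟨hm1, hmk, hkn⟩
  · rintro ⟨h1, h2, h3⟩
    exact ⟨⟨p.1, p.2⟩, ⟨⟨le_trans h1 h2, h3⟩, h1, h2⟩, rfl⟩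

lemma prod_eq (n : ℕ) :
    (∏ k ∈ Finset.Icc 1 n, (((1 - (X : PowerSeries ℚ) ^ k) ^ k)⁻¹)) =
      ∏ p ∈ P n, geom p.1 := by
  rw [P, Finset.prod_map]
  change _ = ∏ x ∈ (Finset.Icc 1 n).sigma (fun k => Finset.Icc 1 k), geom x.1
  rw [Finset.prod_sigma]
  refine Finset.prod_congr rfl fun k hk => ?_
  dsimp only
  rw [inv_pow_eq k (mem_Icc.mp hk).1, Finset.prod_const, Nat.card_Icc]
  simp

/-- The finset of admissible weight functions. -/
noncomputable def F (n : ℕ) : Finset ((ℕ × ℕ) →₀ ℕ) :=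
  (Finset.finsuppAntidiag (P n) n).filter fun l => ∀ p ∈ P n, p.1 ∣ l p

lemma mem_F {n : ℕ} {l : (ℕ × ℕ) →₀ ℕ} :
    l ∈ F n ↔ ((∑ p ∈ P n, l p = n ∧ l.support ⊆ P n) ∧ ∀ p ∈ P n, p.1 ∣ l p) := by
  rw [F, Finset.mem_filter, Finset.mem_finsuppAntidiag]

noncomputable def toL (s : Multiset (ℕ × ℕ)) : (ℕ × ℕ) →₀ ℕ :=
  Finsupp.onFinset s.toFinset (fun p => p.1 * s.count p)
    (fun p h => by
      rw [Multiset.mem_toFinset, ← Multiset.count_pos]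
      by_contra hp
      rw [Nat.not_lt, Nat.le_zero] at hp
      simp [hp] at h)

lemma toL_apply (s : Multiset (ℕ × ℕ)) (p : ℕ × ℕ) : toL s p = p.1 * s.count p := rfl

noncomputable def toS (l : (ℕ × ℕ) →₀ ℕ) : Multiset (ℕ × ℕ) :=
  ∑ p ∈ l.support, Multiset.replicate (l p / p.1) p

lemma count_toS (l : (ℕ × ℕ) →₀ ℕ) (q : ℕ × ℕ) :
    (toS l).count q = if q ∈ l.support then l q / q.1 else 0 := by
  rw [toS, Multiset.count_sum']
  simp only [Multiset.count_replicate]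
  exact Finset.sum_ite_eq' l.support q fun p => l p / p.1

lemma mem_P_of_mem {n : ℕ} {s : Multiset (ℕ × ℕ)}
    (hs1 : ∀ p ∈ s, 1 ≤ p.2 ∧ p.2 ≤ p.1) (hs2 : (s.map Prod.fst).sum = n)
    {p : ℕ × ℕ} (hp : p ∈ s) : p ∈ P n := by
  obtain ⟨h1, h2⟩ := hs1 p hp
  refine mem_P.mpr ⟨h1, h2, ?_⟩
  calc p.1 ≤ (s.map Prod.fst).sum :=
        Multiset.single_le_sum (fun x _ => Nat.zero_le x) _ (Multiset.mem_map_of_mem _ hp)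
    _ = n := hs2

lemma toL_mem {n : ℕ} {s : Multiset (ℕ × ℕ)}
    (hs1 : ∀ p ∈ s, 1 ≤ p.2 ∧ p.2 ≤ p.1) (hs2 : (s.map Prod.fst).sum = n) :
    toL s ∈ F n := by
  have hsub : s.toFinset ⊆ P n := fun p hp =>
    mem_P_of_mem hs1 hs2 (Multiset.mem_toFinset.mp hp)
  rw [mem_F]
  refine ⟨⟨?_, fun p hp => hsub (Finsupp.support_onFinset_subset hp)⟩,
    fun p _ => dvd_mul_right _ _⟩
  rw [← Finset.sum_subset hsub (fun p _ hps => by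
    rw [toL_apply, Multiset.count_eq_zero_of_notMem
      (fun h => hps (Multiset.mem_toFinset.mpr h)), mul_zero])]
  calc ∑ p ∈ s.toFinset, toL s p
      = ∑ p ∈ s.toFinset, s.count p • p.1 := by
        refine Finset.sum_congr rfl fun p _ => ?_
        rw [toL_apply, smul_eq_mul, mul_comm]
    _ = (s.map Prod.fst).sum := (Finset.sum_multiset_map_count s Prod.fst).symm
    _ = n := hs2

lemma toS_cond {n : ℕ} {l : (ℕ × ℕ) →₀ ℕ} (hl : l ∈ F n) :
    ∀ p ∈ toS l, 1 ≤ p.2 ∧ p.2 ≤ p.1 := by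
  intro p hp
  have hsupp : p ∈ l.support := by
    by_contra h
    have hc := count_toS l p
    rw [if_neg h] at hc
    rw [← Multiset.count_pos, hc] at hp
    exact Nat.lt_irrefl 0 hp
  have h := mem_P.mp ((mem_F.mp hl).1.2 hsupp)
  exact ⟨h.1, h.2.1⟩

lemma toS_sum {n : ℕ} {l : (ℕ × ℕ) →₀ ℕ} (hl : l ∈ F n) :
    ((toS l).map Prod.fst).sum = n := by
  obtain ⟨⟨hsum, hsupp⟩, hdvd⟩ := mem_F.mp hl
  have htf : (toS l).toFinset ⊆ l.support := by
    intro q hq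
    by_contra h
    have hc := count_toS l q
    rw [if_neg h] at hc
    rw [Multiset.mem_toFinset, ← Multiset.count_pos, hc] at hq
    exact Nat.lt_irrefl 0 hq
  rw [Finset.sum_multiset_map_count]
  rw [Finset.sum_subset htf (fun q _ hq => by
    rw [Multiset.count_eq_zero_of_notMem
      (fun h => hq (Multiset.mem_toFinset.mpr h)), zero_smul])]
  calc ∑ q ∈ l.support, (toS l).count q • q.1
      = ∑ q ∈ l.support, l q := by
        refine Finset.sum_congr rfl fun q hq => ?_
        rw [count_toS, if_pos hq, smul_eq_mul,
          Nat.div_mul_cancel (hdvd q (hsupp hq))]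
    _ = ∑ q ∈ P n, l q :=
        Finset.sum_subset hsupp (fun q _ hq => Finsupp.notMem_support_iff.mp hq)
    _ = n := hsum

lemma toL_toS {n : ℕ} {l : (ℕ × ℕ) →₀ ℕ} (hl : l ∈ F n) : toL (toS l) = l := by
  obtain ⟨⟨hsum, hsupp⟩, hdvd⟩ := mem_F.mp hl
  ext q
  rw [toL_apply, count_toS]
  by_cases hq : q ∈ l.support
  · rw [if_pos hq]
    exact Nat.mul_div_cancel' (hdvd q (hsupp hq))
  · rw [if_neg hq, mul_zero, eq_comm]
    exact Finsupp.notMem_support_iff.mp hq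

lemma toS_toL {s : Multiset (ℕ × ℕ)}
    (hs1 : ∀ p ∈ s, 1 ≤ p.2 ∧ p.2 ≤ p.1) : toS (toL s) = s := by
  ext q
  rw [count_toS]
  by_cases hq : q ∈ s
  · have h1 : 1 ≤ q.1 := le_trans (hs1 q hq).1 (hs1 q hq).2
    have hc : s.count q ≠ 0 := by
      rw [Ne, Multiset.count_eq_zero]
      exact fun h => h hq
    have hmem : q ∈ (toL s).support := by
      rw [Finsupp.mem_support_iff, toL_apply]
      exact Nat.mul_ne_zero (by omega) hc
    rw [if_pos hmem, toL_apply, Nat.mul_div_cancel_left _ (by omega : 0 < q.1)]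
  · have hc : s.count q = 0 := Multiset.count_eq_zero.mpr hq
    have hmem : q ∉ (toL s).support := by
      simp [Finsupp.mem_support_iff, toL_apply, hc]
    rw [if_neg hmem, hc]

lemma T_eq_card (n : ℕ) : T n = (F n).card := by
  rw [T, ← Nat.card_eq_finsetCard]
  exact Nat.card_congr
    ⟨fun s => ⟨toL s.1, toL_mem s.2.1 s.2.2⟩,
     fun l => ⟨toS l.1, toS_cond l.2, toS_sum l.2⟩,
     fun s => Subtype.ext (toS_toL s.2.1),
     fun l => Subtype.ext (toL_toS l.2)⟩

lemma coeff_eq (n : ℕ) :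
    coeff n (∏ p ∈ P n, geom p.1) = ((F n).card : ℚ) := by
  rw [PowerSeries.coeff_prod]
  have : ∀ l ∈ Finset.finsuppAntidiag (P n) n,
      (∏ p ∈ P n, coeff (l p) (geom p.1)) =
        if ∀ p ∈ P n, p.1 ∣ l p then (1 : ℚ) else 0 := by
    intro l _
    simp only [geom, coeff_mk]
    rw [Finset.prod_boole]
  rw [Finset.sum_congr rfl this, Finset.sum_boole, F]

end MacMahonAux

open MacMahonAux Finset

/-- MacMahon's generating function (truncated at `k = n`, which suffices for
the coefficient of `X^n`): `T n` is the coefficient of `X^n` in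
`Π_{k=1}^{n} (1 - X^k)^{-k}` in `ℚ⟦X⟧`. -/
theorem T_eq_coeff_macmahon (n : ℕ) (hn : 1 ≤ n) :
    (T n : ℚ) =
      coeff n (∏ k ∈ Finset.Icc 1 n,
        (((1 - (X : PowerSeries ℚ) ^ k) ^ k)⁻¹)) := by
  rw [prod_eq n, coeff_eq n]
  exact_mod_cast T_eq_card n
end
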